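/- arXiv:2010.12162 — 3 statements merged into one kernel-verified Lean document; each statement's English description precedes it below -/
import Mathlib

section
/- Let m ≥ 2 be an integer, let B ⊆ mℤ be an infinite set of integers divisible by m, let f̃ be an integer with 1 ≤ f̃ ≤ m − 1, and let F be a finite nonempty set of integers each congruent to f̃ modulo m. Suppose there exist sets S₁, …, Sₙ ⊆ ℤ with S₁ ∪ ⋯ ∪ Sₙ = mℕ ∪ B such that for each i there exists Wᵢ ⊆ ℤ with F + Wᵢ = mℤ \ Sᵢ. If m ≥ f̃ + 2f̃·⌊(n+1)/f̃⌋ + ((n+1) mod f̃), then the set C = mℕ ∪ B ∪ F arises as a minimal additive complement in ℤ. -/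
open Pointwise

/-- `C` is a minimal additive complement to `W` in `ℤ`. -/
def IsMAC (C W : Set ℤ) : Prop :=
  C + W = Set.univ ∧ ∀ C' : Set ℤ, C' ⊂ C → C' + W ≠ Set.univ

/-- `C` arises as a minimal additive complement in `ℤ`. -/
def ArisesAsMAC (C : Set ℤ) : Prop :=
  ∃ W : Set ℤ, IsMAC C W

/-!
Write `C₀ = mℕ ∪ B ⊆ mℤ`, so that `C = C₀ ∪ F` with `F ⊆ f + mℤ`, and build the complement `W`
class by class modulo `m`. Each `Sᵢ` gets a slot, a pair of classes `ρ` and `ρ + f`: in the class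
of `ρ + f` the set `W` is a single point `t`, in the class of `ρ` it contains `Wᵢ + t`. Then `c + t`
is a private point of each `c ∈ Sᵢ`, since its only other decomposition would go through
`F + (Wᵢ + t)`, which misses `Sᵢ + t`; and `C₀ + t` together with `F + (Wᵢ + t)` covers the class
of `ρ + f` because `F + Wᵢ = mℤ \ Sᵢ`. One more pair of classes carries a gadget giving private
points to the elements of `F`, and every other class lies in `W`. The bound on `m` leaves room for
`n + 1` such pairs below `m`.

It remains to cover the classes `ρ`. If every `mℤ \ Sᵢ` is unbounded below, so is `Wᵢ + t`, and
`mℕ + (Wᵢ + t)` covers the class. Otherwise some `mℤ \ S_{i₀}` is bounded below. The other slots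
then only protect points above that bound, so they may take in a whole left half-line of their
class. Slot `i₀` instead uses a class `ρ - f` left free, which exists when `m ≠ 2f`; when `m = 2f`
the bound leaves room for one more slot, and slot `i₀` repairs the finitely many points it misses
by a finite set, handing the few points of `C₀` this endangers to the extra slot. If `m = 2f` and
`mℤ ⊆ S_{i₀}`, two singleton classes `{0}` and `{t₁}` suffice.
-/

theorem Int.emod_eq_of_modEq {m x s : ℤ} (h : x ≡ s [ZMOD m]) (h0 : 0 ≤ s) (h1 : s < m) :
    x % m = s :=
  Eq.trans h (Int.emod_eq_of_lt h0 h1)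

theorem Int.modEq_of_emod_eq {m x s : ℤ} (h : x % m = s) : x ≡ s [ZMOD m] :=
  h ▸ (Int.mod_modEq x m).symm

theorem Int.sub_emod_of_dvd {m c : ℤ} (x : ℤ) (h : m ∣ c) : (x - c) % m = x % m := by
  obtain ⟨k, rfl⟩ := h
  exact Int.sub_mul_emod_self_left x m k

theorem Int.add_emod_of_dvd {m c : ℤ} (x : ℤ) (h : m ∣ c) : (c + x) % m = x % m := by
  obtain ⟨k, rfl⟩ := h
  rw [add_comm]
  exact Int.add_mul_emod_self_left x m k

theorem Int.sub_emod_of_modEq {m x c s f : ℤ} (hx : x % m = s + f) (hc : c ≡ f [ZMOD m])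
    (h0 : 0 ≤ s) (h1 : s < m) : (x - c) % m = s :=
  Int.emod_eq_of_modEq (by simpa using (Int.modEq_of_emod_eq hx).sub hc) h0 h1

theorem Int.exists_nat_sub_mul_le {m : ℤ} (hm : 0 < m) (z b : ℤ) : ∃ k : ℕ, z - m * k ≤ b := by
  refine ⟨(z - b).toNat, ?_⟩
  have : ((z - b).toNat : ℤ) ≤ m * (z - b).toNat := le_mul_of_one_le_left (by positivity) hm
  omega

theorem Int.exists_nat_sub_mul_notMem {m : ℤ} (hm : 0 < m) {X Y : Set ℤ} (hX : BddAbove X)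
    (hY : Y.Finite) : ∃ k : ℕ, ∀ x ∈ X, x - m * k ∉ Y := by
  obtain ⟨a, ha⟩ := hX
  obtain ⟨b, hb⟩ := hY.bddBelow
  obtain ⟨k, hk⟩ := Int.exists_nat_sub_mul_le hm a (b - 1)
  exact ⟨k, fun x hx hy => by linarith [ha hx, hb hy]⟩

theorem eq_of_abs_mul_sub_lt {K a a' : ℤ} (h : |K * (a - a')| < K) : a = a' := by
  by_contra hne
  have h1 : 1 ≤ |a - a'| := Int.one_le_abs (sub_ne_zero.2 hne)
  have hK : 0 < K := (abs_nonneg _).trans_lt h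
  rw [abs_mul, abs_of_pos hK] at h
  nlinarith

theorem isMAC_of_exists_private {C W : Set ℤ} (hcover : ∀ z, ∃ c ∈ C, z - c ∈ W)
    (hpriv : ∀ c ∈ C, ∃ x, x - c ∈ W ∧ ∀ c' ∈ C, x - c' ∈ W → c' = c) : IsMAC C W := by
  refine ⟨Set.eq_univ_of_forall fun z => ?_, fun C' hC' hcover' => ?_⟩
  · obtain ⟨c, hc, hw⟩ := hcover z
    exact Set.mem_add.2 ⟨c, hc, z - c, hw, add_sub_cancel c z⟩
  · obtain ⟨c, hc, hcC'⟩ := Set.exists_of_ssubset hC'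
    obtain ⟨x, -, hx⟩ := hpriv c hc
    obtain ⟨c', hc', w, hw, rfl⟩ := Set.mem_add.1 (hcover' ▸ Set.mem_univ x)
    have : c' = c := hx c' (hC'.subset hc') (by rwa [add_sub_cancel_left])
    exact hcC' (this ▸ hc')

/-- In the complement, the class of `g - f` will be `Hᶜ`: then `F` covers the class of `g` and
each element of `F` has a private point there. -/
structure IsSeparatingSet (m g : ℤ) (F H : Set ℤ) : Prop where
  finite : H.Finite
  exists_sub_notMem : ∀ z, ∃ fe ∈ F, z - fe ∉ H
  exists_private : ∀ fe ∈ F, ∃ x, x ≡ g [ZMOD m] ∧ x - fe ∉ H ∧ ∀ fe' ∈ F, x - fe' ∉ H → fe' = fe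

theorem exists_isSeparatingSet {m : ℤ} (hm : 0 < m) {F : Set ℤ} (hF : F.Finite) (hne : F.Nonempty)
    (g : ℤ) : ∃ H, IsSeparatingSet m g F H := by
  obtain ⟨lo, hlo, hlo_le⟩ := Set.exists_min_image F id hF hne
  obtain ⟨hi, hhi, hle_hi⟩ := Set.exists_max_image F id hF hne
  have hbd : ∀ a ∈ F, lo ≤ a ∧ a ≤ hi := fun a ha => ⟨hlo_le a ha, hle_hi a ha⟩
  -- the anchors `x a` are spaced further apart than twice the diameter of `F`
  set K := m * (2 * (hi - lo) + 1)
  have hK : 2 * (hi - lo) < K := by nlinarith [hbd lo hlo]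
  set x : ℤ → ℤ := fun a => g + K * a
  have hx_eq : ∀ a a', |x a - x a'| ≤ 2 * (hi - lo) → a = a' := fun a a' h =>
    eq_of_abs_mul_sub_lt (K := K) (by rw [show K * (a - a') = x a - x a' by ring]; omega)
  set H := {y | ∃ a ∈ F, ∃ b ∈ F, a ≠ b ∧ y = x a - b}
  have hanchor : ∀ a ∈ F, x a - a ∉ H := by
    rintro a ha ⟨a', -, b, hb, hne, heq⟩
    obtain rfl : a = a' := hx_eq a a' (by have := hbd a ha; have := hbd b hb; rw [abs_le]; omega)
    exact hne (by omega)
  refine ⟨H, ⟨?_, fun z => ?_, fun fe hfe => ⟨x fe, ?_, hanchor fe hfe, fun fe' hfe' h => ?_⟩⟩⟩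
  · exact ((hF.prod hF).image fun p => x p.1 - p.2).subset
      fun y ⟨a, ha, b, hb, _, hy⟩ => ⟨(a, b), ⟨ha, hb⟩, hy.symm⟩
  · -- if `z - lo` and `z - hi` both lie in `H`, they come from the same anchor, which is `z`
    by_contra! hall
    obtain ⟨a₁, ha₁, b₁, hb₁, -, h₁⟩ := hall lo hlo
    obtain ⟨a₂, -, b₂, hb₂, -, h₂⟩ := hall hi hhi
    have := hbd b₁ hb₁; have := hbd b₂ hb₂
    obtain rfl : a₁ = a₂ := hx_eq a₁ a₂ (by rw [abs_le]; omega)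
    obtain rfl : z = x a₁ := by omega
    exact hanchor a₁ ha₁ (hall a₁ ha₁)
  · exact (Int.modEq_iff_dvd.2 ⟨(2 * (hi - lo) + 1) * fe, by ring⟩).symm
  · by_contra hne
    exact h ⟨fe, hfe, fe', hfe', Ne.symm hne, rfl⟩

section Slots

variable {ι : Type*}

/-- `none` is the gadget slot. -/
def slotResidue (g : ℤ) (r : ι → ℤ) (a : Option ι) : ℤ :=
  a.elim g r

structure IsSlotLayout (m f g : ℤ) (r : ι → ℤ) : Prop where
  injective : (slotResidue g r).Injective
  ne_add : ∀ a b, slotResidue g r a ≠ slotResidue g r b + f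
  pos : 0 < f
  nonneg : ∀ a, 0 ≤ slotResidue g r a
  add_lt : ∀ a, slotResidue g r a + f < m

def slotSet (m f g : ℤ) (H : Set ℤ) (r t : ι → ℤ) (V : ι → Set ℤ) : Set ℤ :=
  {x | (x % m = g → x ∉ H) ∧ x % m ≠ g + f ∧
    ∀ i, (x % m = r i → x ∈ V i) ∧ (x % m = r i + f → x = t i)}

variable {m f g : ℤ} {H : Set ℤ} {r t : ι → ℤ} {V : ι → Set ℤ} {C₀ F : Set ℤ} {x : ℤ}

theorem IsSlotLayout.slot_bounds (hL : IsSlotLayout m f g r) (i : ι) :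
    0 ≤ r i ∧ r i + f < m ∧ 0 < f :=
  ⟨hL.nonneg (some i), hL.add_lt (some i), hL.pos⟩

theorem IsSlotLayout.gadget_bounds (hL : IsSlotLayout m f g r) : 0 ≤ g ∧ g + f < m ∧ 0 < f :=
  ⟨hL.nonneg none, hL.add_lt none, hL.pos⟩

theorem IsSlotLayout.add_emod (hL : IsSlotLayout m f g r) (i : ι) : (r i + f) % m = r i + f :=
  have := hL.slot_bounds i
  Int.emod_eq_of_lt (by omega) this.2.1

theorem mem_slotSet_of_forall_ne
    (h : ∀ a, x % m ≠ slotResidue g r a ∧ x % m ≠ slotResidue g r a + f) :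
    x ∈ slotSet m f g H r t V :=
  ⟨fun hx => absurd hx (h none).1, (h none).2,
    fun i => ⟨fun hx => absurd hx (h (some i)).1, fun hx => absurd hx (h (some i)).2⟩⟩

theorem notMem_slotSet_of_emod_eq_gadget_add (hx : x % m = g + f) :
    x ∉ slotSet m f g H r t V :=
  fun h => h.2.1 hx

theorem mem_slotSet_iff_of_emod_eq_gadget (hL : IsSlotLayout m f g r) (hx : x % m = g) :
    x ∈ slotSet m f g H r t V ↔ x ∉ H := by
  refine ⟨fun h => h.1 hx, fun h => ⟨fun _ => h, hx ▸ hL.ne_add none none, fun i => ⟨?_, ?_⟩⟩⟩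
  · exact fun hi => absurd (hi.symm.trans hx) (hL.injective.ne (Option.some_ne_none i))
  · exact fun hi => absurd (hx.symm.trans hi) (hL.ne_add none (some i))

theorem mem_slotSet_iff_of_emod_eq (hL : IsSlotLayout m f g r) (i : ι) (hx : x % m = r i) :
    x ∈ slotSet m f g H r t V ↔ x ∈ V i := by
  refine ⟨fun h => (h.2.2 i).1 hx, fun h => ⟨?_, ?_, fun j => ⟨fun hj => ?_, fun hj => ?_⟩⟩⟩
  · exact fun hg => absurd (hx.symm.trans hg) (hL.injective.ne (Option.some_ne_none i))
  · exact fun hg => hL.ne_add (some i) none (hx.symm.trans hg)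
  · obtain rfl : i = j := Option.some_injective _ (hL.injective (hx.symm.trans hj))
    exact h
  · exact absurd (hx.symm.trans hj) (hL.ne_add (some i) (some j))

theorem mem_slotSet_iff_of_emod_eq_add (hL : IsSlotLayout m f g r) (i : ι)
    (hx : x % m = r i + f) : x ∈ slotSet m f g H r t V ↔ x = t i := by
  refine ⟨fun h => (h.2.2 i).2 hx, fun h => ⟨?_, ?_, fun j => ⟨fun hj => ?_, fun hj => ?_⟩⟩⟩
  · exact fun hg => (hL.ne_add none (some i) (hg.symm.trans hx)).elim
  · exact fun hg => absurd (add_right_cancel (hx.symm.trans hg))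
      (hL.injective.ne (Option.some_ne_none i))
  · exact absurd (hj.symm.trans hx) (hL.ne_add (some j) (some i))
  · obtain rfl : i = j :=
      Option.some_injective _ (hL.injective (add_right_cancel (hx.symm.trans hj)))
    exact h

theorem exists_private_of_slot (hL : IsSlotLayout m f g r) (hC₀ : ∀ c ∈ C₀, m ∣ c)
    (hF : ∀ x ∈ F, x ≡ f [ZMOD m]) {i : ι} (ht : t i % m = r i + f) {c : ℤ} (hc : c ∈ C₀)
    (hV : ∀ fe ∈ F, c + t i - fe ∉ V i) :
    ∃ x, x - c ∈ slotSet m f g H r t V ∧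
      ∀ c' ∈ C₀ ∪ F, x - c' ∈ slotSet m f g H r t V → c' = c := by
  have hx : (c + t i) % m = r i + f := by rw [Int.add_emod_of_dvd _ (hC₀ c hc), ht]
  refine ⟨c + t i, by rwa [add_sub_cancel_left, mem_slotSet_iff_of_emod_eq_add hL i], ?_⟩
  rintro c' (hc' | hc') hmem
  · rw [mem_slotSet_iff_of_emod_eq_add hL i (by rwa [Int.sub_emod_of_dvd _ (hC₀ c' hc')])] at hmem
    omega
  · have := hL.slot_bounds i
    exact absurd ((mem_slotSet_iff_of_emod_eq hL i
      (Int.sub_emod_of_modEq hx (hF c' hc') (by omega) (by omega))).1 hmem) (hV c' hc')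

theorem exists_private_of_gadget (hL : IsSlotLayout m f g r) (hC₀ : ∀ c ∈ C₀, m ∣ c)
    (hF : ∀ x ∈ F, x ≡ f [ZMOD m]) (hH : IsSeparatingSet m (g + f) F H) {fe : ℤ} (hfe : fe ∈ F) :
    ∃ x, x - fe ∈ slotSet m f g H r t V ∧
      ∀ c' ∈ C₀ ∪ F, x - c' ∈ slotSet m f g H r t V → c' = fe := by
  obtain ⟨hg0, hgm, hf0⟩ := hL.gadget_bounds
  obtain ⟨x, hxg, hxfe, huniq⟩ := hH.exists_private fe hfe
  have hx : x % m = g + f := Int.emod_eq_of_modEq hxg (by omega) hgm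
  have hres : ∀ c ∈ F, (x - c) % m = g :=
    fun c hc => Int.sub_emod_of_modEq hx (hF c hc) hg0 (by omega)
  refine ⟨x, (mem_slotSet_iff_of_emod_eq_gadget hL (hres fe hfe)).2 hxfe, ?_⟩
  rintro c' (hc' | hc') hmem
  · exact absurd hmem (notMem_slotSet_of_emod_eq_gadget_add
      (by rw [Int.sub_emod_of_dvd _ (hC₀ c' hc'), hx]))
  · exact huniq c' hc' ((mem_slotSet_iff_of_emod_eq_gadget hL (hres c' hc')).1 hmem)

theorem exists_sub_mem_slotSet_of_mem (hL : IsSlotLayout m f g r) {i : ι} {z c : ℤ}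
    (hz : z % m = r i) (hc : c ∈ C₀) (hC₀ : m ∣ c) (hv : z - c ∈ V i) :
    ∃ c ∈ C₀ ∪ F, z - c ∈ slotSet m f g H r t V :=
  ⟨c, Or.inl hc, (mem_slotSet_iff_of_emod_eq hL i (by rwa [Int.sub_emod_of_dvd _ hC₀])).2 hv⟩

theorem exists_sub_mem_slotSet_of_le (hL : IsSlotLayout m f g r) (hnat : ∀ k : ℕ, m * k ∈ C₀)
    {i : ι} {z v : ℤ} (hz : z % m = r i) (hv : v ∈ V i) (hvz : v ≤ z) (hdvd : m ∣ z - v) :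
    ∃ c ∈ C₀ ∪ F, z - c ∈ slotSet m f g H r t V := by
  obtain ⟨k, hk⟩ := hdvd
  have := hL.slot_bounds i
  have hk₀ : 0 ≤ k := by nlinarith
  refine exists_sub_mem_slotSet_of_mem hL hz (hnat k.toNat) (dvd_mul_right _ _) ?_
  rwa [Int.toNat_of_nonneg hk₀, ← hk, sub_sub_cancel]

theorem exists_sub_mem_slotSet_of_Iic_subset (hL : IsSlotLayout m f g r)
    (hnat : ∀ k : ℕ, m * k ∈ C₀) {i : ι} {b : ℤ} (hV : Set.Iic b ⊆ V i) {z : ℤ}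
    (hz : z % m = r i) : ∃ c ∈ C₀ ∪ F, z - c ∈ slotSet m f g H r t V := by
  have := hL.slot_bounds i
  obtain ⟨k, hk⟩ := Int.exists_nat_sub_mul_le (by omega : 0 < m) z b
  exact exists_sub_mem_slotSet_of_mem hL hz (hnat k) (dvd_mul_right _ _) (hV hk)

theorem exists_sub_mem_slotSet (hL : IsSlotLayout m f g r) (hF : ∀ x ∈ F, x ≡ f [ZMOD m])
    (hnat : ∀ k : ℕ, m * k ∈ C₀) (hH : IsSeparatingSet m (g + f) F H)
    (ht : ∀ i, t i % m = r i + f)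
    (hcar : ∀ i z, z % m = r i + f → z - t i ∈ C₀ ∨ ∃ fe ∈ F, z - fe ∈ V i)
    (hwit : ∀ i z, z % m = r i → ∃ c ∈ C₀ ∪ F, z - c ∈ slotSet m f g H r t V) (z : ℤ) :
    ∃ c ∈ C₀ ∪ F, z - c ∈ slotSet m f g H r t V := by
  obtain ⟨hg0, hgm, hf0⟩ := hL.gadget_bounds
  by_cases hg : z % m = g
  · obtain ⟨k, hk⟩ :=
      Int.exists_nat_sub_mul_notMem (m := m) (by omega) (bddAbove_singleton (a := z)) hH.finite
    refine ⟨m * k, Or.inl (hnat k), (mem_slotSet_iff_of_emod_eq_gadget hL ?_).2 (hk z rfl)⟩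
    rwa [Int.sub_mul_emod_self_left]
  by_cases hgf : z % m = g + f
  · obtain ⟨fe, hfe, hz⟩ := hH.exists_sub_notMem z
    exact ⟨fe, Or.inr hfe, (mem_slotSet_iff_of_emod_eq_gadget hL
      (Int.sub_emod_of_modEq hgf (hF fe hfe) hg0 (by omega))).2 hz⟩
  by_cases hr : ∃ i, z % m = r i
  · obtain ⟨i, hi⟩ := hr
    exact hwit i z hi
  by_cases hrf : ∃ i, z % m = r i + f
  · obtain ⟨i, hi⟩ := hrf
    have := hL.slot_bounds i
    rcases hcar i z hi with hc | ⟨fe, hfe, hv⟩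
    · exact ⟨z - t i, Or.inl hc,
        (mem_slotSet_iff_of_emod_eq_add hL i (by simpa using ht i)).2 (by ring)⟩
    · exact ⟨fe, Or.inr hfe, (mem_slotSet_iff_of_emod_eq hL i
        (Int.sub_emod_of_modEq hi (hF fe hfe) (by omega) (by omega))).2 hv⟩
  simp only [not_exists] at hr hrf
  refine ⟨0, Or.inl (by simpa using hnat 0), ?_⟩
  rw [sub_zero]
  refine mem_slotSet_of_forall_ne fun a => ?_
  cases a with
  | none => exact ⟨hg, hgf⟩
  | some i => exact ⟨hr i, hrf i⟩

theorem isMAC_slotSet (hL : IsSlotLayout m f g r) (hC₀ : ∀ c ∈ C₀, m ∣ c)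
    (hF : ∀ x ∈ F, x ≡ f [ZMOD m]) (hnat : ∀ k : ℕ, m * k ∈ C₀)
    (hH : IsSeparatingSet m (g + f) F H) (ht : ∀ i, t i % m = r i + f)
    (hcar : ∀ i z, z % m = r i + f → z - t i ∈ C₀ ∨ ∃ fe ∈ F, z - fe ∈ V i)
    (hwit : ∀ i z, z % m = r i → ∃ c ∈ C₀ ∪ F, z - c ∈ slotSet m f g H r t V)
    (hpriv : ∀ c ∈ C₀, ∃ x, x - c ∈ slotSet m f g H r t V ∧
      ∀ c' ∈ C₀ ∪ F, x - c' ∈ slotSet m f g H r t V → c' = c) :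
    IsMAC (C₀ ∪ F) (slotSet m f g H r t V) :=
  isMAC_of_exists_private (exists_sub_mem_slotSet hL hF hnat hH ht hcar hwit) fun c hc =>
    hc.elim (hpriv c) fun hc => exists_private_of_gadget hL hC₀ hF hH hc

end Slots

/-- Position `p = f * a + j` (with `0 ≤ j < f`) gets the residue `2 * f * a + j`: positions fill
the lower halves of consecutive blocks of length `2 * f`, so residues `ρ` and `ρ + f` never clash. -/
def layoutResidue (f : ℤ) (p : ℕ) : ℤ :=
  2 * (f * ((p : ℤ) / f)) + (p : ℤ) % f

section Layout

variable {f : ℤ}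

theorem layoutResidue_emod_ediv (hf : 0 < f) (p : ℕ) :
    layoutResidue f p % (2 * f) = (p : ℤ) % f ∧ layoutResidue f p / (2 * f) = (p : ℤ) / f := by
  have h0 := Int.emod_nonneg (p : ℤ) hf.ne'
  have h1 := Int.emod_lt_of_pos (p : ℤ) hf
  have h : layoutResidue f p = (p : ℤ) % f + (p : ℤ) / f * (2 * f) := by
    unfold layoutResidue; ring
  rw [h, Int.add_mul_emod_self_right, Int.add_mul_ediv_right _ _ (by omega),
    Int.emod_eq_of_lt h0 (by omega), Int.ediv_eq_zero_of_lt h0 (by omega), zero_add]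
  exact ⟨rfl, rfl⟩

theorem layoutResidue_add_emod (hf : 0 < f) (p : ℕ) :
    (layoutResidue f p + f) % (2 * f) = (p : ℤ) % f + f := by
  have h0 := Int.emod_nonneg (p : ℤ) hf.ne'
  have h1 := Int.emod_lt_of_pos (p : ℤ) hf
  have h : layoutResidue f p + f = ((p : ℤ) % f + f) + (p : ℤ) / f * (2 * f) := by
    unfold layoutResidue; ring
  rw [h, Int.add_mul_emod_self_right, Int.emod_eq_of_lt (by omega) (by omega)]

theorem layoutResidue_injective (hf : 0 < f) : Function.Injective (layoutResidue f) := by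
  intro p q h
  obtain ⟨hp₁, hp₂⟩ := layoutResidue_emod_ediv hf p
  obtain ⟨hq₁, hq₂⟩ := layoutResidue_emod_ediv hf q
  have e₁ := Int.mul_ediv_add_emod (p : ℤ) f
  have e₂ := Int.mul_ediv_add_emod (q : ℤ) f
  rw [h] at hp₁ hp₂
  rw [hp₁.symm.trans hq₁, hp₂.symm.trans hq₂] at e₁
  omega

theorem layoutResidue_ne_add (hf : 0 < f) (p q : ℕ) :
    layoutResidue f p ≠ layoutResidue f q + f := by
  intro h
  have := congrArg (· % (2 * f)) h
  simp only [(layoutResidue_emod_ediv hf p).1, layoutResidue_add_emod hf q] at this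
  have := Int.emod_nonneg (q : ℤ) hf.ne'
  have := Int.emod_lt_of_pos (p : ℤ) hf
  omega

theorem layoutResidue_bounds (hf : 0 < f) {N p : ℕ} (hp : p < N) :
    0 ≤ layoutResidue f p ∧ layoutResidue f p < 2 * (f * (N / f)) + N % f ∧
      (layoutResidue f p + f < 2 * (f * (N / f)) + N % f ∨
        2 * (f * (N / f)) + f ≤ layoutResidue f p + f) ∧
      layoutResidue f p + f < f + 2 * (f * (N / f)) + N % f := by
  have hj₀ := Int.emod_nonneg (p : ℤ) hf.ne'
  have hj₁ := Int.emod_lt_of_pos (p : ℤ) hf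
  have hR₀ := Int.emod_nonneg (N : ℤ) hf.ne'
  have hp' := Int.mul_ediv_add_emod (p : ℤ) f
  have hN' := Int.mul_ediv_add_emod (N : ℤ) f
  have ha₀ : 0 ≤ f * ((p : ℤ) / f) := mul_nonneg hf.le (Int.ediv_nonneg (by omega) hf.le)
  have haQ : (p : ℤ) / f ≤ (N : ℤ) / f := Int.ediv_le_ediv hf (by omega)
  unfold layoutResidue
  rcases haQ.eq_or_lt with heq | hlt
  · rw [heq] at hp' ha₀ ⊢
    omega
  · have : f * ((p : ℤ) / f + 1) ≤ f * ((N : ℤ) / f) := mul_le_mul_of_nonneg_left hlt hf.le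
    rw [mul_add_one] at this
    omega

theorem isSlotLayout_layoutResidue {ι : Type*} {m : ℤ} {N : ℕ} (hf : 0 < f)
    (pos : Option ι → ℕ) (hinj : pos.Injective) (hlt : ∀ a, pos a < N)
    (hfit : f + 2 * f * (N / f) + N % f ≤ m) :
    IsSlotLayout m f (layoutResidue f (pos none)) fun i => layoutResidue f (pos (some i)) := by
  have hρ : slotResidue (layoutResidue f (pos none)) (fun i => layoutResidue f (pos (some i))) =
      layoutResidue f ∘ pos := funext fun a => by cases a <;> rfl
  rw [mul_assoc] at hfit
  refine ⟨hρ ▸ (layoutResidue_injective hf).comp hinj, fun a b => hρ ▸ layoutResidue_ne_add hf _ _,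
    hf, fun a => hρ ▸ (layoutResidue_bounds hf (hlt a)).1, fun a => ?_⟩
  exact hρ ▸ (layoutResidue_bounds hf (hlt a)).2.2.2.trans_le hfit

theorem isSlotLayout_of_lt {ι : Type*} {m : ℤ} (pos : Option ι → ℕ) (hinj : pos.Injective)
    (hlt : ∀ a, (pos a : ℤ) < f) (hm : 2 * f ≤ m) :
    IsSlotLayout m f (pos none) fun i => (pos (some i) : ℤ) := by
  have hρ : slotResidue (pos none : ℤ) (fun i => (pos (some i) : ℤ)) = fun a => (pos a : ℤ) :=
    funext fun a => by cases a <;> rfl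
  have h0 : ∀ a, (0 : ℤ) ≤ pos a := fun a => Int.natCast_nonneg _
  refine ⟨hρ ▸ Nat.cast_injective.comp hinj, fun a b => ?_, ?_, fun a => hρ ▸ h0 a, fun a => ?_⟩
  · rw [hρ]; beta_reduce; have := hlt a; have := h0 b; omega
  · have := hlt none; have := h0 none; omega
  · rw [hρ]; beta_reduce; have := hlt a; omega

theorem exists_free_layoutResidue {m : ℤ} (hf : 0 < f) {N : ℕ} (hN : 0 < N)
    (hfit : f + 2 * f * (N / f) + N % f ≤ m) (hm : m ≠ 2 * f) :
    ∃ p < N, ∀ x, x ≡ layoutResidue f p - f [ZMOD m] →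
      ∀ q < N, x % m ≠ layoutResidue f q ∧ x % m ≠ layoutResidue f q + f := by
  have hR₀ := Int.emod_nonneg (N : ℤ) hf.ne'
  have hR₁ := Int.emod_lt_of_pos (N : ℤ) hf
  have hN' := Int.mul_ediv_add_emod (N : ℤ) f
  have hQ₀ : 0 ≤ f * ((N : ℤ) / f) := mul_nonneg hf.le (Int.ediv_nonneg (by omega) hf.le)
  rw [mul_assoc] at hfit
  -- the free residue is `m - f + p`, for a position `p < f` (so that `ρ p = p`)
  suffices ∃ p < N, (p : ℤ) < f ∧ 2 * (f * (N / f)) + N % f ≤ m - f + p ∧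
      (m - f + p < 2 * (f * (N / f)) + f ∨ f + 2 * (f * (N / f)) + N % f ≤ m - f + p) by
    obtain ⟨p, hpN, hpf, h₁, h₂⟩ := this
    refine ⟨p, hpN, fun x hx q hq => ?_⟩
    have hρp : layoutResidue f p = p := by
      simp [layoutResidue, Int.ediv_eq_zero_of_lt (Int.natCast_nonneg p) hpf,
        Int.emod_eq_of_lt (Int.natCast_nonneg p) hpf]
    have hxm : x % m = m - f + p := by
      refine Int.emod_eq_of_modEq (hx.trans ?_) (by omega) (by omega)
      rw [hρp]
      exact Int.modEq_iff_dvd.2 ⟨1, by ring⟩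
    have := layoutResidue_bounds hf hq
    omega
  by_cases h : m - f < 2 * (f * (N / f)) + f ∨ f + 2 * (f * (N / f)) + N % f ≤ m - f
  · exact ⟨0, hN, by simpa using hf, by simpa using ⟨by omega, h⟩⟩
  · -- `m - f` falls among the carriers of the last, partial block: step past them, which stays
    -- below `N` because `m ≠ 2 * f`
    exact ⟨(2 * (f * (N / f)) + 2 * f + N % f - m).toNat, by omega, by omega, by omega,
      Or.inr (by omega)⟩

end Layout

section Positions

variable {n : ℕ}

theorem Fin.optionElim_injective :
    Function.Injective fun a : Option (Fin n) => a.elim n Fin.val := by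
  rintro (_ | a) (_ | b) h <;> simp only [Option.elim] at h
  · rfl
  · exact absurd h.symm b.isLt.ne
  · exact absurd h a.isLt.ne
  · rw [Fin.ext h]

theorem Fin.optionElim_lt (a : Option (Fin n)) : a.elim n Fin.val < n + 1 := by
  cases a with
  | none => exact Nat.lt_succ_self n
  | some i => exact Nat.lt_succ_of_lt i.isLt

theorem Fin.optionElim_optionElim_injective : Function.Injective
    fun a : Option (Option (Fin n)) => a.elim (n + 1) fun b => b.elim n Fin.val := by
  rintro (_ | a) (_ | b) h <;> simp only [Option.elim] at h
  · rfl
  · exact absurd h.symm (Fin.optionElim_lt b).ne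
  · exact absurd h (Fin.optionElim_lt a).ne
  · rw [Fin.optionElim_injective h]

theorem Fin.optionElim_optionElim_lt (a : Option (Option (Fin n))) :
    (a.elim (n + 1) fun b => b.elim n Fin.val) < n + 2 := by
  cases a with
  | none => exact Nat.lt_succ_self _
  | some b => exact Nat.lt_succ_of_lt (Fin.optionElim_lt b)

theorem Fin.exists_optionElim_swap {p : ℕ} (hp : p < n + 1) (i₀ : Fin n) :
    ∃ pos : Option (Fin n) → ℕ, pos.Injective ∧ (∀ a, pos a < n + 1) ∧ pos (some i₀) = p := by
  refine ⟨fun a => Equiv.swap p i₀ (a.elim n Fin.val),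
    (Equiv.injective _).comp Fin.optionElim_injective, fun a => ?_, Equiv.swap_apply_right _ _⟩
  have := Fin.optionElim_lt a
  have := i₀.isLt
  simp only [Equiv.swap_apply_def]
  split_ifs <;> omega

end Positions

section Cover

variable {m f : ℤ} {C₀ F S W : Set ℤ}

theorem sub_mem_or_exists_sub_mem_of_image_subset (hW : F + W = {x | m ∣ x} \ S) (hS : S ⊆ C₀)
    {t : ℤ} {V : Set ℤ} (hV : (· + t) '' W ⊆ V) {z : ℤ} (hdvd : m ∣ z - t) :
    z - t ∈ C₀ ∨ ∃ fe ∈ F, z - fe ∈ V := by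
  by_cases hc : z - t ∈ C₀
  · exact Or.inl hc
  · have : z - t ∈ F + W := hW ▸ ⟨hdvd, fun hS' => hc (hS hS')⟩
    obtain ⟨fe, hfe, w, hw, hsum⟩ := Set.mem_add.1 this
    exact Or.inr ⟨fe, hfe, hV ⟨w, hw, by simp only; omega⟩⟩

theorem add_sub_notMem_image (hW : F + W = {x | m ∣ x} \ S) {c fe : ℤ} (hc : c ∈ S)
    (hfe : fe ∈ F) (t : ℤ) : c + t - fe ∉ (· + t) '' W := by
  rintro ⟨w, hw, hwt⟩
  have : fe + w ∈ F + W := Set.add_mem_add hfe hw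
  rw [hW] at this
  exact this.2 (by rwa [show fe + w = c by simp only at hwt; omega])

theorem finite_setOf_dvd_notMem (hm : 0 < m) (hnat : ∀ k : ℕ, m * k ∈ C₀) {b₀ : ℤ}
    (hb₀ : ∀ x, m ∣ x → x ∉ C₀ → b₀ ≤ x) : {x | m ∣ x ∧ x ∉ C₀}.Finite := by
  refine (Set.finite_Ico b₀ 0).subset fun x ⟨hdvd, hx⟩ => ⟨hb₀ x hdvd hx, ?_⟩
  by_contra! hx₀
  obtain ⟨k, rfl⟩ := hdvd
  have hk : 0 ≤ k := by nlinarith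
  exact hx (by simpa [Int.toNat_of_nonneg hk] using hnat k.toNat)

/-- `C₀ + (W + t)` misses only finitely many points of the class of `ρ`, since `W ≠ ∅` and
`mℤ \ C₀` is finite. -/
theorem exists_finite_cover_leftover (hm : 0 < m) (hF : ∀ x ∈ F, x ≡ f [ZMOD m])
    (hW : F + W = {x | m ∣ x} \ S) (hne : ∃ x, m ∣ x ∧ x ∉ S)
    (hG : {x | m ∣ x ∧ x ∉ C₀}.Finite) {ρ t : ℤ} (ht : t ≡ ρ + f [ZMOD m]) (β : ℤ) :
    ∃ U : Set ℤ, U.Finite ∧ (∀ u ∈ U, u < β) ∧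
      ∀ z, z ≡ ρ [ZMOD m] → (∃ w ∈ W, z - (w + t) ∈ C₀) ∨ ∃ k : ℕ, z - m * k ∈ U := by
  obtain ⟨x₁, hx₁m, hx₁S⟩ := hne
  obtain ⟨fe₁, hfe₁, w₁, hw₁, rfl⟩ := Set.mem_add.1 (hW ▸ ⟨hx₁m, hx₁S⟩ : x₁ ∈ F + W)
  set Z := {z | z ≡ ρ [ZMOD m] ∧ ∀ w ∈ W, z - (w + t) ∉ C₀}
  have hZ : Z.Finite := by
    refine (hG.image (· + (w₁ + t))).subset fun z ⟨hz, hzW⟩ =>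
      ⟨z - (w₁ + t), ⟨?_, hzW w₁ hw₁⟩, by simp⟩
    rw [show z - (w₁ + t) = (z - ρ) - (t - (ρ + f)) - (fe₁ + w₁) + (fe₁ - f) by ring]
    exact ((hz.symm.dvd.sub ht.symm.dvd).sub hx₁m).add (hF fe₁ hfe₁).symm.dvd
  obtain ⟨a, ha⟩ := hZ.bddAbove
  obtain ⟨k₀, hk₀⟩ := Int.exists_nat_sub_mul_le hm a (β - 1)
  refine ⟨(· - m * k₀) '' Z, hZ.image _, ?_, fun z hz => ?_⟩
  · rintro _ ⟨z, hz, rfl⟩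
    linarith [ha hz]
  · by_cases h : ∃ w ∈ W, z - (w + t) ∈ C₀
    · exact Or.inl h
    · exact Or.inr ⟨k₀, z, ⟨hz, fun w hw hC => h ⟨w, hw, hC⟩⟩, rfl⟩

theorem exists_extra_slot (hm : 0 < m) (hFfin : F.Finite) {fe₀ lo hi : ℤ}
    (hlo : lo ∈ lowerBounds F) (hhi : hi ∈ upperBounds F) {G U : Set ℤ} (hU : U.Finite)
    {b₀ tJ : ℤ} (hG : ∀ x ∈ G, b₀ ≤ x) (hUβ : ∀ u ∈ U, u < b₀ + lo - fe₀ - hi + tJ) (t : ℤ) :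
    ∃ V : Set ℤ, (∀ x ∈ G, x + t - fe₀ ∈ V) ∧ (∀ z, ∃ k : ℕ, z - m * k ∈ V) ∧
      ∀ c, (∃ fe' ∈ F, c + tJ - fe' ∈ U) → ∀ fe ∈ F, c + t - fe ∉ V := by
  set D := {c | ∃ fe' ∈ F, c + tJ - fe' ∈ U}
  have hD : D.Finite := (hU.image2 (fun u fe => u - tJ + fe) hFfin).subset
    fun c ⟨fe, hfe, hu⟩ => ⟨_, hu, fe, hfe, by ring⟩
  set E := Set.image2 (fun d fe => d + t - fe) D F
  refine ⟨(· + t - fe₀) '' G ∪ Eᶜ, fun x hx => Or.inl ⟨x, hx, rfl⟩, fun z => ?_, ?_⟩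
  · obtain ⟨k, hk⟩ :=
      Int.exists_nat_sub_mul_notMem hm (bddAbove_singleton (a := z)) (hD.image2 _ hFfin)
    exact ⟨k, Or.inr (hk z rfl)⟩
  · rintro c hc fe hfe (⟨x, hx, hxc⟩ | hE)
    · -- `U` lies to the left of `G + F - F - fe₀ + tJ`
      obtain ⟨fe', hfe', hu⟩ := hc
      have := hUβ _ hu; have := hG x hx; have := hlo hfe; have := hhi hfe'
      simp only at hxc
      linarith
    · exact hE ⟨c, hc, fe, hfe, rfl⟩

end Cover

section Branches

variable {m f : ℤ} {C₀ F : Set ℤ} {n : ℕ} {S Wf : Fin n → Set ℤ}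

theorem arisesAsMAC_of_forall_unbounded (hf : 0 < f) (hC₀ : ∀ c ∈ C₀, m ∣ c)
    (hnat : ∀ k : ℕ, m * k ∈ C₀) (hF : ∀ x ∈ F, x ≡ f [ZMOD m]) (hFfin : F.Finite)
    (hFne : F.Nonempty) (hW : ∀ i, F + Wf i = {x | m ∣ x} \ S i) (hcover : ⋃ i, S i = C₀)
    (hfit : f + 2 * f * (((n : ℤ) + 1) / f) + ((n : ℤ) + 1) % f ≤ m)
    (hunb : ∀ i b, ∃ x, m ∣ x ∧ x ∉ S i ∧ x < b) : ArisesAsMAC (C₀ ∪ F) := by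
  have hL : IsSlotLayout m f (layoutResidue f n) fun i : Fin n => layoutResidue f i :=
    isSlotLayout_layoutResidue hf _ Fin.optionElim_injective Fin.optionElim_lt
      (by push_cast; exact hfit)
  have hm : 0 < m := by have := hL.gadget_bounds; omega
  obtain ⟨H, hH⟩ := exists_isSeparatingSet hm hFfin hFne (layoutResidue f n + f)
  obtain ⟨lo, hlo⟩ := hFfin.bddBelow
  refine ⟨_, isMAC_slotSet (t := fun i : Fin n => layoutResidue f i + f)
    (V := fun i => (· + (layoutResidue f i + f)) '' Wf i) hL hC₀ hF hnat hH hL.add_emod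
    (fun i z hz => ?_) (fun i z hz => ?_) fun c hc => ?_⟩
  · exact sub_mem_or_exists_sub_mem_of_image_subset (hW i) (hcover ▸ Set.subset_iUnion S i)
      subset_rfl (Int.ModEq.dvd ((hL.add_emod i).trans hz.symm))
  · -- a point of `Wf i` far enough to the left gives a point of `V i` below `z` in its class
    obtain ⟨x, hxm, hxS, hxz⟩ := hunb i (z - (layoutResidue f i + f) + lo)
    obtain ⟨fe, hfe, w, hw, rfl⟩ := Set.mem_add.1 (hW i ▸ ⟨hxm, hxS⟩ : x ∈ F + Wf i)
    refine exists_sub_mem_slotSet_of_le hL hnat hz ⟨w, hw, rfl⟩ (by linarith [hlo hfe]) ?_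
    rw [show z - (w + (layoutResidue f i + f)) = z - layoutResidue f i - (fe + w) - (f - fe) by
      ring]
    exact ((Int.modEq_of_emod_eq hz).symm.dvd.sub hxm).sub (hF fe hfe).dvd
  · obtain ⟨i, hci⟩ := Set.mem_iUnion.1 (hcover ▸ hc)
    exact exists_private_of_slot hL hC₀ hF (hL.add_emod i) hc
      fun fe hfe => add_sub_notMem_image (hW i) hci hfe _

theorem arisesAsMAC_of_bddBelow_of_ne_two_mul (hf : 0 < f) (hC₀ : ∀ c ∈ C₀, m ∣ c)
    (hnat : ∀ k : ℕ, m * k ∈ C₀) (hF : ∀ x ∈ F, x ≡ f [ZMOD m]) (hFfin : F.Finite)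
    (hFne : F.Nonempty) (hW : ∀ i, F + Wf i = {x | m ∣ x} \ S i) (hcover : ⋃ i, S i = C₀)
    (hfit : f + 2 * f * (((n : ℤ) + 1) / f) + ((n : ℤ) + 1) % f ≤ m) (hm2f : m ≠ 2 * f)
    {i₀ : Fin n} {b₀ : ℤ} (hb₀ : ∀ x, m ∣ x → x ∉ S i₀ → b₀ ≤ x) : ArisesAsMAC (C₀ ∪ F) := by
  have hfit' : f + 2 * f * ((n + 1 : ℕ) / f) + (n + 1 : ℕ) % f ≤ m := by push_cast; exact hfit
  obtain ⟨p, hpN, hpfree⟩ := exists_free_layoutResidue hf (Nat.succ_pos n) hfit' hm2f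
  obtain ⟨pos, hinj, hpos, hpos₀⟩ := Fin.exists_optionElim_swap hpN i₀
  set r : Fin n → ℤ := fun i => layoutResidue f (pos (some i))
  have hL : IsSlotLayout m f (layoutResidue f (pos none)) r :=
    isSlotLayout_layoutResidue hf pos hinj hpos hfit'
  have hm : 0 < m := by have := hL.gadget_bounds; omega
  obtain ⟨H, hH⟩ := exists_isSeparatingSet hm hFfin hFne (layoutResidue f (pos none) + f)
  obtain ⟨hi, hhi⟩ := hFfin.bddAbove
  refine ⟨_, isMAC_slotSet (t := fun i => r i + f)
    (V := fun i => (· + (r i + f)) '' Wf i ∪ {v | i ≠ i₀ ∧ v ≤ b₀ + (r i + f) - hi - 1})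
    hL hC₀ hF hnat hH hL.add_emod (fun i z hz => ?_) (fun i z hz => ?_) fun c hc => ?_⟩
  · exact sub_mem_or_exists_sub_mem_of_image_subset (hW i) (hcover ▸ Set.subset_iUnion S i)
      Set.subset_union_left (Int.ModEq.dvd ((hL.add_emod i).trans hz.symm))
  · by_cases hi₀ : i = i₀
    · -- the class of `r i₀` is covered by `F` plus the free class of `r i₀ - f`
      subst hi₀
      obtain ⟨fe, hfe⟩ := hFne
      have hx : z - fe ≡ layoutResidue f p - f [ZMOD m] :=
        hpos₀ ▸ (Int.modEq_of_emod_eq hz).sub (hF fe hfe)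
      refine ⟨fe, Or.inr hfe, mem_slotSet_of_forall_ne fun a => ?_⟩
      cases a <;> exact hpfree _ hx _ (hpos _)
    · exact exists_sub_mem_slotSet_of_Iic_subset hL hnat (fun v hv => Or.inr ⟨hi₀, hv⟩) hz
  · by_cases hc₀ : c ∈ S i₀
    · exact exists_private_of_slot hL hC₀ hF (hL.add_emod i₀) hc fun fe hfe h =>
        h.elim (add_sub_notMem_image (hW i₀) hc₀ hfe _) fun h => h.1 rfl
    · obtain ⟨i, hci⟩ := Set.mem_iUnion.1 (hcover ▸ hc)
      have hcb := hb₀ c (hC₀ c hc) hc₀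
      exact exists_private_of_slot hL hC₀ hF (hL.add_emod i) hc fun fe hfe h =>
        h.elim (add_sub_notMem_image (hW i) hci hfe _) fun h => by linarith [h.2, hhi hfe]

/-- Slot `some i₀` covers its class up to finitely many points, repaired by `U`; the points of
`C₀` that `U` deprives of their private point are protected by the extra slot `none`. -/
theorem arisesAsMAC_of_repair {g : ℤ} {r : Option (Fin n) → ℤ} (hL : IsSlotLayout m f g r)
    (hC₀ : ∀ c ∈ C₀, m ∣ c) (hnat : ∀ k : ℕ, m * k ∈ C₀) (hF : ∀ x ∈ F, x ≡ f [ZMOD m])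
    (hFfin : F.Finite) {fe₀ hi : ℤ} (hfe₀ : fe₀ ∈ F) (hhi : hi ∈ upperBounds F)
    (hW : ∀ i, F + Wf i = {x | m ∣ x} \ S i) (hcover : ⋃ i, S i = C₀) {i₀ : Fin n} {b₀ : ℤ}
    (hb₀ : ∀ x, m ∣ x → x ∉ S i₀ → b₀ ≤ x) {U VD : Set ℤ}
    (hU : ∀ z, z % m = r (some i₀) →
      (∃ w ∈ Wf i₀, z - (w + (r (some i₀) + f)) ∈ C₀) ∨ ∃ k : ℕ, z - m * k ∈ U)
    (hVD : ∀ x, m ∣ x → x ∉ C₀ → x + (r none + f) - fe₀ ∈ VD)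
    (hVDcov : ∀ z, ∃ k : ℕ, z - m * k ∈ VD)
    (hVDpriv : ∀ c, (∃ fe' ∈ F, c + (r (some i₀) + f) - fe' ∈ U) →
      ∀ fe ∈ F, c + (r none + f) - fe ∉ VD) :
    ArisesAsMAC (C₀ ∪ F) := by
  have hm : 0 < m := by have := hL.gadget_bounds; omega
  have hSC : ∀ i, S i ⊆ C₀ := fun i => hcover ▸ Set.subset_iUnion S i
  obtain ⟨H, hH⟩ := exists_isSeparatingSet hm hFfin ⟨fe₀, hfe₀⟩ (g + f)
  refine ⟨_, isMAC_slotSet (t := fun a => r a + f)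
    (V := fun a => a.elim VD fun i => (· + (r (some i) + f)) '' Wf i ∪
      {v | i = i₀ ∧ v ∈ U ∨ i ≠ i₀ ∧ v ≤ b₀ + (r (some i) + f) - hi - 1})
    hL hC₀ hF hnat hH hL.add_emod (fun a z hz => ?_) (fun a z hz => ?_) fun c hc => ?_⟩
  · have hdvd : m ∣ z - (r a + f) := Int.ModEq.dvd ((hL.add_emod a).trans hz.symm)
    cases a with
    | none =>
      by_cases hzC : z - (r none + f) ∈ C₀
      · exact Or.inl hzC
      · exact Or.inr ⟨fe₀, hfe₀, by simpa using hVD _ hdvd hzC⟩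
    | some i =>
      exact sub_mem_or_exists_sub_mem_of_image_subset (hW i) (hSC i) Set.subset_union_left hdvd
  · cases a with
    | none =>
      obtain ⟨k, hk⟩ := hVDcov z
      exact exists_sub_mem_slotSet_of_mem hL hz (hnat k) (dvd_mul_right _ _) hk
    | some i =>
      by_cases hi₀ : i = i₀
      · subst hi₀
        rcases hU z hz with ⟨w, hw, hwC⟩ | ⟨k, hk⟩
        · exact exists_sub_mem_slotSet_of_mem hL hz hwC (hC₀ _ hwC) (Or.inl ⟨w, hw, by simp⟩)
        · exact exists_sub_mem_slotSet_of_mem hL hz (hnat k) (dvd_mul_right _ _)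
            (Or.inr (Or.inl ⟨rfl, hk⟩))
      · exact exists_sub_mem_slotSet_of_Iic_subset hL hnat
          (fun v hv => Or.inr (Or.inr ⟨hi₀, hv⟩)) hz
  · by_cases hcU : ∃ fe' ∈ F, c + (r (some i₀) + f) - fe' ∈ U
    · exact exists_private_of_slot (i := none) hL hC₀ hF (hL.add_emod none) hc (hVDpriv c hcU)
    by_cases hc₀ : c ∈ S i₀
    · exact exists_private_of_slot (i := some i₀) hL hC₀ hF (hL.add_emod _) hc fun fe hfe h =>
        h.elim (add_sub_notMem_image (hW i₀) hc₀ hfe _) fun h =>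
          h.elim (fun h => hcU ⟨fe, hfe, h.2⟩) fun h => h.1 rfl
    · obtain ⟨i, hci⟩ := Set.mem_iUnion.1 (hcover ▸ hc)
      have hcb := hb₀ c (hC₀ c hc) hc₀
      exact exists_private_of_slot (i := some i) hL hC₀ hF (hL.add_emod _) hc fun fe hfe h =>
        h.elim (add_sub_notMem_image (hW i) hci hfe _) fun h =>
          h.elim (fun h => hc₀ (h.1 ▸ hci)) fun h => by linarith [h.2, hhi hfe]

theorem arisesAsMAC_of_bddBelow_of_nonempty {g : ℤ} {r : Option (Fin n) → ℤ}
    (hL : IsSlotLayout m f g r) (hC₀ : ∀ c ∈ C₀, m ∣ c) (hnat : ∀ k : ℕ, m * k ∈ C₀)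
    (hF : ∀ x ∈ F, x ≡ f [ZMOD m]) (hFfin : F.Finite) (hFne : F.Nonempty)
    (hW : ∀ i, F + Wf i = {x | m ∣ x} \ S i) (hcover : ⋃ i, S i = C₀) {i₀ : Fin n} {b₀ : ℤ}
    (hb₀ : ∀ x, m ∣ x → x ∉ S i₀ → b₀ ≤ x) (hne : ∃ x, m ∣ x ∧ x ∉ S i₀) :
    ArisesAsMAC (C₀ ∪ F) := by
  have hm : 0 < m := by have := hL.gadget_bounds; omega
  have hGb : ∀ x, m ∣ x → x ∉ C₀ → b₀ ≤ x := fun x hx hxC =>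
    hb₀ x hx fun h => hxC (hcover ▸ Set.mem_iUnion.2 ⟨i₀, h⟩)
  obtain ⟨fe₀, hfe₀⟩ := hFne
  obtain ⟨lo, hlo⟩ := hFfin.bddBelow
  obtain ⟨hi, hhi⟩ := hFfin.bddAbove
  obtain ⟨U, hU, hUβ, hUcov⟩ := exists_finite_cover_leftover (ρ := r (some i₀)) hm hF (hW i₀)
    hne (finite_setOf_dvd_notMem hm hnat hGb) Int.ModEq.rfl
    (b₀ + lo - fe₀ - hi + (r (some i₀) + f))
  obtain ⟨VD, hVD, hVDcov, hVDpriv⟩ := exists_extra_slot hm hFfin hlo hhi hU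
    (G := {x | m ∣ x ∧ x ∉ C₀}) (fun x hx => hGb x hx.1 hx.2) hUβ (r none + f)
  exact arisesAsMAC_of_repair hL hC₀ hnat hF hFfin hfe₀ hhi hW hcover hb₀
    (fun z hz => hUcov z (Int.modEq_of_emod_eq hz)) (fun x hx hxC => hVD x ⟨hx, hxC⟩) hVDcov
    hVDpriv

/-- The classes of `0` and `f` meet the complement in `{0}` and `{t₁}`, with `t₁ > diam F`; each
`c ∈ C₀` keeps `c + t₁` or `c` as its private point. -/
theorem arisesAsMAC_of_forall_dvd_mem (hf : 2 ≤ f) (hm : m = 2 * f) (hC₀ : ∀ c ∈ C₀, m ∣ c)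
    (hall : ∀ x, m ∣ x → x ∈ C₀) (hF : ∀ x ∈ F, x ≡ f [ZMOD m]) (hFfin : F.Finite)
    (hFne : F.Nonempty) : ArisesAsMAC (C₀ ∪ F) := by
  have hL : IsSlotLayout m f 1 fun _ : Unit => 0 :=
    isSlotLayout_of_lt (fun a : Option Unit => a.elim 1 fun _ => 0)
      (by rintro (_ | _) (_ | _) h <;> simp_all) (by rintro (_ | _) <;> simp <;> omega) (by omega)
  have hnat : ∀ k : ℕ, m * k ∈ C₀ := fun k => hall _ (dvd_mul_right _ _)
  obtain ⟨lo, hlo⟩ := hFfin.bddBelow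
  obtain ⟨hi, hhi⟩ := hFfin.bddAbove
  obtain ⟨H, hH⟩ := exists_isSeparatingSet (m := m) (by omega) hFfin hFne (1 + f)
  set t₁ := f + m * (hi - lo).toNat
  have ht₁ : hi - lo < t₁ := by
    have : ((hi - lo).toNat : ℤ) ≤ m * (hi - lo).toNat :=
      le_mul_of_one_le_left (by omega) (by omega)
    omega
  have ht : ∀ _ : Unit, t₁ % m = 0 + f := fun _ => by
    rw [zero_add, Int.add_mul_emod_self_left, Int.emod_eq_of_lt (by omega) (by omega)]
  refine ⟨_, isMAC_slotSet (t := fun _ => t₁) (V := fun _ => {0}) hL hC₀ hF hnat hH ht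
    (fun _ z hz => Or.inl (hall _ (Int.ModEq.dvd ((ht ()).trans hz.symm))))
    (fun _ z hz => exists_sub_mem_slotSet_of_mem (i := ()) hL hz
      (hall z (Int.dvd_of_emod_eq_zero hz)) (Int.dvd_of_emod_eq_zero hz) (sub_self z))
    fun c hc => ?_⟩
  by_cases hcf : ∀ fe ∈ F, c + t₁ - fe ∉ ({0} : Set ℤ)
  · exact exists_private_of_slot (i := ()) hL hC₀ hF (ht ()) hc hcf
  -- otherwise `c + t₁ ∈ F`, and then `c` is a private point of `c` itself
  push Not at hcf
  obtain ⟨fe₁, hfe₁, hc₁⟩ := hcf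
  have hc₀ : c % m = 0 := Int.emod_eq_zero_of_dvd (hC₀ c hc)
  refine ⟨c, (mem_slotSet_iff_of_emod_eq hL () (by simp)).2 (sub_self c), ?_⟩
  rintro c' (hc' | hc') hmem
  · have := (mem_slotSet_iff_of_emod_eq hL ()
      (by rw [Int.sub_emod_of_dvd _ (hC₀ c' hc'), hc₀])).1 hmem
    simp only [Set.mem_singleton_iff] at this
    omega
  · -- since `m = 2 * f`, `c - c'` lies in the class of `f`, where the complement is `{t₁}`
    have h := ((Int.modEq_of_emod_eq hc₀).sub (hF c' hc')).dvd
    have hres : (c - c') % m = 0 + f := by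
      refine Int.emod_eq_of_modEq (Int.modEq_iff_dvd.2 ?_) (by omega) (by omega)
      rw [show 0 + f - (c - c') = 0 - f - (c - c') + m by omega]
      exact h.add dvd_rfl
    have := (mem_slotSet_iff_of_emod_eq_add hL () hres).1 hmem
    simp only [Set.mem_singleton_iff] at hc₁
    linarith [hlo hc', hhi hfe₁, hhi hc']

end Branches

theorem add_two_le_of_eq_two_mul {m f : ℤ} {n : ℕ} (hf : 0 < f) (hm : m = 2 * f)
    (hfit : f + 2 * f * (((n : ℤ) + 1) / f) + ((n : ℤ) + 1) % f ≤ m) : (n : ℤ) + 2 ≤ f := by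
  have hq := Int.ediv_nonneg (by omega : (0 : ℤ) ≤ n + 1) hf.le
  have hr := Int.emod_lt_of_pos ((n : ℤ) + 1) hf
  have hdiv := Int.mul_ediv_add_emod ((n : ℤ) + 1) f
  rw [mul_assoc] at hfit
  obtain hq₀ | hq₁ := hq.eq_or_lt
  · rw [← hq₀, mul_zero] at hdiv
    omega
  · have : f * 1 ≤ f * (((n : ℤ) + 1) / f) := mul_le_mul_of_nonneg_left hq₁ hf.le
    omega

theorem set_cover_bound_infinite_B_implies_MAC_general
    (m : ℤ)
    (B : Set ℤ) (hBdvd : ∀ b ∈ B, m ∣ b)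
    (ft : ℤ) (hf₁ : 1 ≤ ft)
    (F : Set ℤ) (hFfin : F.Finite) (hFne : F.Nonempty)
    (hFcong : ∀ f ∈ F, m ∣ f - ft)
    (n : ℕ) (S : Fin n → Set ℤ)
    (hScover : (⋃ i, S i) = {x : ℤ | ∃ k : ℕ, x = m * k} ∪ B)
    (hScov : ∀ i, ∃ W : Set ℤ, F + W = {x : ℤ | m ∣ x} \ S i)
    (hbound : ft + 2 * ft * (((n : ℤ) + 1) / ft) + ((n : ℤ) + 1) % ft ≤ m) :
    ArisesAsMAC ({x : ℤ | ∃ k : ℕ, x = m * k} ∪ B ∪ F) := by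
  have hf : 0 < ft := hf₁
  have hC₀ : ∀ c ∈ {x : ℤ | ∃ k : ℕ, x = m * k} ∪ B, m ∣ c := by
    rintro c (⟨k, rfl⟩ | hc)
    exacts [dvd_mul_right _ _, hBdvd c hc]
  have hnat : ∀ k : ℕ, m * k ∈ {x : ℤ | ∃ k : ℕ, x = m * k} ∪ B := fun k => Or.inl ⟨k, rfl⟩
  have hF : ∀ x ∈ F, x ≡ ft [ZMOD m] := fun x hx => (Int.modEq_iff_dvd.2 (hFcong x hx)).symm
  choose Wf hW using hScov
  by_cases hunb : ∀ i b, ∃ x, m ∣ x ∧ x ∉ S i ∧ x < b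
  · exact arisesAsMAC_of_forall_unbounded hf hC₀ hnat hF hFfin hFne hW hScover hbound hunb
  push Not at hunb
  obtain ⟨i₀, b₀, hb₀⟩ := hunb
  by_cases hm2f : m = 2 * ft
  · have hn := add_two_le_of_eq_two_mul hf hm2f hbound
    by_cases hne : ∃ x, m ∣ x ∧ x ∉ S i₀
    · have hL := isSlotLayout_of_lt _ (Fin.optionElim_optionElim_injective (n := n))
        (fun a => by have := Fin.optionElim_optionElim_lt a; omega) hm2f.ge
      exact arisesAsMAC_of_bddBelow_of_nonempty hL hC₀ hnat hF hFfin hFne hW hScover hb₀ hne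
    · push Not at hne
      exact arisesAsMAC_of_forall_dvd_mem (by omega) hm2f hC₀
        (fun x hx => hScover ▸ Set.mem_iUnion.2 ⟨i₀, hne x hx⟩) hF hFfin hFne
  · exact arisesAsMAC_of_bddBelow_of_ne_two_mul hf hC₀ hnat hF hFfin hFne hW hScover hbound hm2f hb₀

theorem set_cover_bound_infinite_B_implies_MAC
    (m : ℤ) (hm : 2 ≤ m)
    (B : Set ℤ) (hBinf : B.Infinite) (hBdvd : ∀ b ∈ B, m ∣ b)
    (ft : ℤ) (hf₁ : 1 ≤ ft) (hf₂ : ft ≤ m - 1)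
    (F : Set ℤ) (hFfin : F.Finite) (hFne : F.Nonempty)
    (hFcong : ∀ f ∈ F, m ∣ f - ft)
    (n : ℕ) (S : Fin n → Set ℤ)
    (hScover : (⋃ i, S i) = {x : ℤ | ∃ k : ℕ, x = m * k} ∪ B)
    (hScov : ∀ i, ∃ W : Set ℤ, F + W = {x : ℤ | m ∣ x} \ S i)
    (hbound : ft + 2 * ft * (((n : ℤ) + 1) / ft) + ((n : ℤ) + 1) % ft ≤ m) :
    ArisesAsMAC ({x : ℤ | ∃ k : ℕ, x = m * k} ∪ B ∪ F) :=
  set_cover_bound_infinite_B_implies_MAC_general m B hBdvd ft hf₁ F hFfin hFne hFcong n S hScover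
    hScov hbound
end

section
/- Let m ≥ 2 be an integer, let A₁, A₂ be finite nonempty sets of integers, and let F₁, F₂ be finite sets of integers with F₁ ∪ (−F₂) nonempty. Suppose that no element of F₁ ∪ (−F₂) is congruent modulo m to any element of A₁ ∪ (−A₂). Let D ⊆ {0, 1, …, m−1} be the set of residues modulo m of the elements of A₁ ∪ F₁ ∪ (−A₂) ∪ (−F₂), and suppose there exist W₀ ⊆ ℤ and integers a ≤ b with D + W₀ = {a, a+1, …, b}; set ℓ = b − a + 1. If m ≥ (ℓ + 1)·(r(F₁) + r(F₂) + r(A₁) + r(A₂)), where r(S) denotes the number of distinct residues of S modulo m, then the set C₁ ∪ (−C₂) arises as a minimal additive complement in ℤ, where C₁ = (mℕ + A₁) ∪ F₁ and C₂ = (mℕ + A₂) ∪ F₂. -/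
open Pointwise

private lemma int_eq_of_dvd_of_lt {m u v : ℤ} (hm : 0 < m) (hdvd : m ∣ u - v)
    (h1 : -m < u - v) (h2 : u - v < m) : u = v := by
  rcases hdvd with ⟨k, hk⟩
  have hk0 : k = 0 := by
    rcases lt_trichotomy k 0 with h | h | h
    · have h3 : m * k ≤ m * (-1) := mul_le_mul_of_nonneg_left (by omega) hm.le
      rw [mul_neg_one] at h3; linarith
    · exact h
    · have h3 : m * 1 ≤ m * k := mul_le_mul_of_nonneg_left (by omega) hm.le
      rw [mul_one] at h3; linarith
  rw [hk0, mul_zero] at hk; omega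

private def rk (s : Finset ℤ) (d : ℤ) : ℕ := (s.filter (fun x => x < d)).card

private lemma rk_lt {s : Finset ℤ} {d : ℤ} (hd : d ∈ s) : rk s d < s.card := by
  apply Finset.card_lt_card
  rw [Finset.ssubset_iff_of_subset (Finset.filter_subset _ _)]
  exact ⟨d, hd, by simp⟩

private lemma rk_lt_rk {s : Finset ℤ} {d d' : ℤ} (hd : d ∈ s) (h : d < d') :
    rk s d < rk s d' := by
  apply Finset.card_lt_card
  have hsub : s.filter (fun x => x < d) ⊆ s.filter (fun x => x < d') := by
    intro x hx
    simp only [Finset.mem_filter] at hx ⊢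
    exact ⟨hx.1, hx.2.trans h⟩
  rw [Finset.ssubset_iff_of_subset hsub]
  exact ⟨d, by simp [hd, h], by simp⟩

private lemma rk_inj {s : Finset ℤ} {d d' : ℤ} (hd : d ∈ s) (hd' : d' ∈ s)
    (h : rk s d = rk s d') : d = d' := by
  rcases lt_trichotomy d d' with hlt | he | hlt
  · exact absurd h (Nat.ne_of_lt (rk_lt_rk hd hlt))
  · exact he
  · exact absurd h.symm (Nat.ne_of_lt (rk_lt_rk hd' hlt))

private lemma rk_surj (s : Finset ℤ) : ∀ j, j < s.card → ∃ d ∈ s, rk s d = j := by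
  induction s using Finset.strongInduction with
  | _ s ih =>
    intro j hj
    have hne : s.Nonempty := Finset.card_pos.mp (by omega)
    have hM := s.max'_mem hne
    set M := s.max' hne with hMdef
    by_cases hjtop : j = s.card - 1
    · refine ⟨M, hM, ?_⟩
      have hfe : s.filter (fun x => x < M) = s.erase M := by
        ext x
        simp only [Finset.mem_filter, Finset.mem_erase]
        constructor
        · rintro ⟨hx, hlt⟩; exact ⟨by omega, hx⟩
        · rintro ⟨hne', hx⟩
          exact ⟨hx, lt_of_le_of_ne (Finset.le_max' s x hx) hne'⟩
      rw [rk, hfe, Finset.card_erase_of_mem hM, hjtop]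
    · obtain ⟨d, hd, hrk⟩ := ih (s.erase M) (Finset.erase_ssubset hM) j
        (by rw [Finset.card_erase_of_mem hM]; omega)
      have hds : d ∈ s := Finset.mem_of_mem_erase hd
      refine ⟨d, hds, ?_⟩
      rw [← hrk, rk, rk]
      congr 1
      ext x
      simp only [Finset.mem_filter, Finset.mem_erase]
      constructor
      · rintro ⟨hx, hlt⟩
        have hdM : d < M := lt_of_le_of_ne (Finset.le_max' s d hds)
          (Finset.ne_of_mem_erase hd)
        exact ⟨⟨by omega, hx⟩, hlt⟩
      · rintro ⟨⟨_, hx⟩, hlt⟩; exact ⟨hx, hlt⟩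

private lemma negimage_eq (m : ℤ) (S : Finset ℤ) :
    (-S).image (· % m) = (S.image (· % m)).image (fun r => (-r) % m) := by
  ext t
  simp only [Finset.mem_image, Finset.mem_neg]
  constructor
  · rintro ⟨x, ⟨y, hy, rfl⟩, rfl⟩
    refine ⟨y % m, ⟨y, hy, rfl⟩, ?_⟩
    have h1 : Int.ModEq m (y % m) y := Int.emod_emod_of_dvd y (dvd_refl m)
    exact h1.neg
  · rintro ⟨r, ⟨y, hy, rfl⟩, rfl⟩
    have h1 : Int.ModEq m (y % m) y := Int.emod_emod_of_dvd y (dvd_refl m)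
    exact ⟨-y, ⟨y, hy, rfl⟩, h1.neg.symm⟩

private lemma card_negimage {m : ℤ} (hm : 0 < m) (S : Finset ℤ) :
    ((-S).image (· % m)).card = (S.image (· % m)).card := by
  rw [negimage_eq m S]
  apply Finset.card_image_of_injOn
  intro r hr r' hr' he
  simp only [Finset.mem_coe, Finset.mem_image] at hr hr'
  obtain ⟨y, _, rfl⟩ := hr
  obtain ⟨y', _, rfl⟩ := hr'
  have h1 : Int.ModEq m (-(y % m)) (-(y' % m)) := he
  have h2 : Int.ModEq m (y % m) (y' % m) := by simpa using h1.neg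
  have h3 : m ∣ y % m - y' % m := Int.ModEq.dvd h2.symm
  refine int_eq_of_dvd_of_lt hm h3 ?_ ?_
  · have := Int.emod_nonneg y hm.ne'
    have := Int.emod_lt_of_pos y' hm
    omega
  · have := Int.emod_lt_of_pos y hm
    have := Int.emod_nonneg y' hm.ne'
    omega
set_option maxHeartbeats 1000000 in
theorem union_with_reflection_is_MAC
    (m : ℤ) (hm : 2 ≤ m)
    (A₁ A₂ F₁ F₂ : Finset ℤ)
    (hA₁ : A₁.Nonempty) (hA₂ : A₂.Nonempty)
    (hFne : (F₁ ∪ (-F₂)).Nonempty)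
    (hcong : ∀ f ∈ F₁ ∪ (-F₂), ∀ α ∈ A₁ ∪ (-A₂), ¬ m ∣ f - α)
    (W₀ : Set ℤ) (a b : ℤ) (hab : a ≤ b)
    (hW₀ : (↑((A₁ ∪ F₁ ∪ (-A₂) ∪ (-F₂)).image (· % m)) : Set ℤ) + W₀ = Set.Icc a b)
    (hbound : ((b - a + 1) + 1) *
        (((F₁.image (· % m)).card : ℤ) + (F₂.image (· % m)).card
          + (A₁.image (· % m)).card + (A₂.image (· % m)).card) ≤ m) :
    ArisesAsMAC
      (({z : ℤ | ∃ α ∈ A₁, ∃ k : ℕ, z = m * k + α} ∪ ↑F₁) ∪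
        -({z : ℤ | ∃ α ∈ A₂, ∃ k : ℕ, z = m * k + α} ∪ ↑F₂)) := by
  classical
  have hm0 : (0:ℤ) < m := by linarith
  set Cset : Set ℤ := ({z : ℤ | ∃ α ∈ A₁, ∃ k : ℕ, z = m * k + α} ∪ ↑F₁) ∪
        -({z : ℤ | ∃ α ∈ A₂, ∃ k : ℕ, z = m * k + α} ∪ ↑F₂) with hCset
  set l : ℤ := b - a + 1 with hldef
  have hl1 : 1 ≤ l := by omega
  set S1 : Finset ℤ := A₁.image (· % m) with hS1def
  set S2 : Finset ℤ := (-A₂).image (· % m) with hS2def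
  set SE : Finset ℤ := (F₁ ∪ (-F₂)).image (· % m) with hSEdef
  have hS1ne : S1.Nonempty := hA₁.image _
  have hS2ne : S2.Nonempty := by
    obtain ⟨α, hα⟩ := hA₂
    rw [hS2def]
    exact ⟨(-α) % m, Finset.mem_image.mpr ⟨-α, Finset.mem_neg.mpr ⟨α, hα, rfl⟩, rfl⟩⟩
  have hSEne : SE.Nonempty := hFne.image _
  set Dfin : Finset ℤ := (S1 ∪ S2) ∪ SE with hDdef
  have hDfin : (A₁ ∪ F₁ ∪ (-A₂) ∪ (-F₂)).image (· % m) = Dfin := by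
    rw [hDdef, hS1def, hS2def, hSEdef]
    simp only [Finset.image_union]
    ext x
    simp only [Finset.mem_union]
    tauto
  rw [hDfin] at hW₀
  have hsub : ∀ d ∈ Dfin, ∀ w ∈ W₀, a ≤ d + w ∧ d + w ≤ b := by
    intro d hd w hw
    have h : (d + w) ∈ (↑Dfin : Set ℤ) + W₀ :=
      Set.add_mem_add (by exact_mod_cast hd) hw
    rw [hW₀] at h
    exact ⟨h.1, h.2⟩
  have hcov0 : ∀ x, a ≤ x → x ≤ b → ∃ d ∈ Dfin, ∃ w ∈ W₀, d + w = x := by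
    intro x h1 h2
    have h : x ∈ (↑Dfin : Set ℤ) + W₀ := by
      rw [hW₀]; exact Set.mem_Icc.mpr ⟨h1, h2⟩
    rcases Set.mem_add.mp h with ⟨d, hd, w, hw, he⟩
    exact ⟨d, by exact_mod_cast hd, w, hw, he⟩
  obtain ⟨d0, hd0, w0, hw0, -⟩ := hcov0 a le_rfl hab
  have hwin : ∀ d ∈ Dfin, a - w0 ≤ d ∧ d ≤ b - w0 := by
    intro d hd
    have := hsub d hd w0 hw0
    omega
  have hres : ∀ z : ℤ, m ∣ z - z % m := by
    intro z
    exact ⟨z / m, by have := Int.mul_ediv_add_emod z m; linarith⟩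
  -- cardinality bound
  set K : ℤ := (S1.card : ℤ) + S2.card + SE.card with hKdef
  have hK1 : 1 ≤ K := by
    have := Finset.card_pos.mpr hS1ne
    have h2 : (0:ℤ) ≤ S2.card := by positivity
    have h3 : (0:ℤ) ≤ SE.card := by positivity
    rw [hKdef]
    have : (1:ℤ) ≤ S1.card := by exact_mod_cast this
    linarith
  have hKm : K * (l + 1) ≤ m := by
    have h2 : (S2.card : ℤ) = ((A₂.image (· % m)).card : ℤ) := by
      rw [hS2def, card_negimage hm0]
    have h3 : (SE.card : ℤ) ≤ ((F₁.image (· % m)).card : ℤ) + ((F₂.image (· % m)).card : ℤ) := by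
      rw [hSEdef, Finset.image_union]
      have h4 := Finset.card_union_le (F₁.image (· % m)) ((-F₂).image (· % m))
      have h5 : ((-F₂).image (· % m)).card = (F₂.image (· % m)).card := card_negimage hm0 F₂
      rw [h5] at h4
      exact_mod_cast h4
    have hKsum : K ≤ ((F₁.image (· % m)).card : ℤ) + (F₂.image (· % m)).card
          + (A₁.image (· % m)).card + (A₂.image (· % m)).card := by
      rw [hKdef, hS1def, h2]
      linarith
    have hl0 : (0:ℤ) ≤ l + 1 := by omega
    calc K * (l + 1) ≤ (((F₁.image (· % m)).card : ℤ) + (F₂.image (· % m)).card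
          + (A₁.image (· % m)).card + (A₂.image (· % m)).card) * (l + 1) :=
            mul_le_mul_of_nonneg_right hKsum hl0
    _ = ((b - a + 1) + 1) * (((F₁.image (· % m)).card : ℤ) + (F₂.image (· % m)).card
          + (A₁.image (· % m)).card + (A₂.image (· % m)).card) := by rw [hldef]; ring
    _ ≤ m := hbound
  -- gap positions
  set gam : ℤ → ℤ := fun i => b + 1 + i * (l + 1) with hgam
  have hgmono : ∀ i j : ℤ, i ≤ j → gam i ≤ gam j := by
    intro i j h
    simp only [hgam]
    have := mul_le_mul_of_nonneg_right h (by omega : (0:ℤ) ≤ l + 1)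
    linarith
  have hgstep : ∀ i : ℤ, gam (i + 1) = gam i + (l + 1) := by
    intro i; simp only [hgam]; ring
  have hgupper : ∀ i : ℤ, i < K → gam i ≤ b + m - l := by
    intro i h
    have h2 : i * (l+1) ≤ (K - 1) * (l + 1) :=
      mul_le_mul_of_nonneg_right (by omega) (by omega)
    have h3 : (K - 1) * (l + 1) = K * (l+1) - (l+1) := by ring
    simp only [hgam]
    omega
  have hglow : ∀ i : ℤ, 0 ≤ i → b + 1 ≤ gam i := by
    intro i h
    have := mul_nonneg h (by omega : (0:ℤ) ≤ l + 1)
    simp only [hgam]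
    omega
  -- index functions
  set i1 : ℤ → ℤ := fun d => (rk S1 d : ℤ) with hi1
  set i2 : ℤ → ℤ := fun d => (S1.card : ℤ) + rk S2 d with hi2
  set i3 : ℤ → ℤ := fun d => (S1.card : ℤ) + S2.card + rk SE d with hi3
  have hi1rng : ∀ d ∈ S1, 0 ≤ i1 d ∧ i1 d < S1.card := by
    intro d hd
    simp only [hi1]
    exact ⟨by positivity, by exact_mod_cast rk_lt hd⟩
  have hi2rng : ∀ d ∈ S2, (S1.card:ℤ) ≤ i2 d ∧ i2 d < (S1.card:ℤ) + S2.card := by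
    intro d hd
    simp only [hi2]
    have := rk_lt hd
    constructor
    · have h0 : (0:ℤ) ≤ (rk S2 d : ℤ) := by positivity
      linarith
    · have : (rk S2 d : ℤ) < S2.card := by exact_mod_cast this
      linarith
  have hi3rng : ∀ e ∈ SE, (S1.card:ℤ) + S2.card ≤ i3 e ∧ i3 e < K := by
    intro e he
    simp only [hi3]
    have := rk_lt he
    constructor
    · have h0 : (0:ℤ) ≤ (rk SE e : ℤ) := by positivity
      linarith
    · have : (rk SE e : ℤ) < SE.card := by exact_mod_cast this
      rw [hKdef]; linarith
  have hi1K : ∀ d ∈ S1, 0 ≤ i1 d ∧ i1 d < K := by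
    intro d hd
    have h := hi1rng d hd
    have h2 : (0:ℤ) ≤ S2.card := by positivity
    have h3 : (0:ℤ) ≤ SE.card := by positivity
    exact ⟨h.1, by rw [hKdef]; linarith [h.2]⟩
  have hi2K : ∀ d ∈ S2, 0 ≤ i2 d ∧ i2 d < K := by
    intro d hd
    have h := hi2rng d hd
    have h1 : (0:ℤ) ≤ S1.card := by positivity
    have h3 : (0:ℤ) ≤ SE.card := by positivity
    exact ⟨by linarith [h.1], by rw [hKdef]; linarith [h.2]⟩
  have hi3K : ∀ e ∈ SE, 0 ≤ i3 e ∧ i3 e < K := by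
    intro e he
    have h := hi3rng e he
    have h1 : (0:ℤ) ≤ S1.card := by positivity
    have h2 : (0:ℤ) ≤ S2.card := by positivity
    exact ⟨by linarith [h.1], h.2⟩
  have hi1inj : ∀ d ∈ S1, ∀ d' ∈ S1, i1 d = i1 d' → d = d' := by
    intro d hd d' hd' h
    simp only [hi1] at h
    exact rk_inj hd hd' (by exact_mod_cast h)
  have hi2inj : ∀ d ∈ S2, ∀ d' ∈ S2, i2 d = i2 d' → d = d' := by
    intro d hd d' hd' h
    simp only [hi2] at h
    exact rk_inj hd hd' (by omega)
  have hi3inj : ∀ e ∈ SE, ∀ e' ∈ SE, i3 e = i3 e' → e = e' := by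
    intro d hd d' hd' h
    simp only [hi3] at h
    exact rk_inj hd hd' (by omega)
  -- Sidon property
  have hsidon : ∀ i j : ℤ, 0 ≤ i → i < K → 0 ≤ j → j < K →
      ∀ d d', d ∈ Dfin → d' ∈ Dfin → m ∣ (gam i - d) - (gam j - d') → i = j ∧ d = d' := by
    intro i j hi0 hiK hj0 hjK d d' hd hd' hdvd
    have hwd := hwin d hd
    have hwd' := hwin d' hd'
    have hexp : (gam i - d) - (gam j - d') = (i - j) * (l + 1) - (d - d') := by
      simp only [hgam]; ring
    rcases hdvd with ⟨k, hk⟩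
    rw [hexp] at hk
    have hb1 : (i - j) * (l + 1) ≤ (K - 1) * (l + 1) :=
      mul_le_mul_of_nonneg_right (by omega) (by omega)
    have hb2 : (-(K - 1)) * (l + 1) ≤ (i - j) * (l + 1) :=
      mul_le_mul_of_nonneg_right (by omega) (by omega)
    have hr1 : (K - 1) * (l + 1) = K * (l + 1) - (l + 1) := by ring
    have hr2 : (-(K - 1)) * (l + 1) = -(K * (l + 1)) + (l + 1) := by ring
    have hk0 : k = 0 := by
      rcases lt_trichotomy k 0 with h | h | h
      · have h3 : m * k ≤ m * (-1) := mul_le_mul_of_nonneg_left (by omega) hm0.le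
        rw [mul_neg_one] at h3
        linarith
      · exact h
      · have h3 : m * 1 ≤ m * k := mul_le_mul_of_nonneg_left (by omega) hm0.le
        rw [mul_one] at h3
        linarith
    rw [hk0, mul_zero] at hk
    have heq : (i - j) * (l + 1) = d - d' := by linarith
    have hij : i = j := by
      rcases lt_trichotomy i j with h | h | h
      · have h3 : (i - j) * (l + 1) ≤ (-1) * (l + 1) :=
          mul_le_mul_of_nonneg_right (by omega) (by omega)
        rw [neg_one_mul] at h3
        linarith
      · exact h
      · have h3 : (1 : ℤ) * (l + 1) ≤ (i - j) * (l + 1) :=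
          mul_le_mul_of_nonneg_right (by omega) (by omega)
        rw [one_mul] at h3
        linarith
    refine ⟨hij, ?_⟩
    rw [hij] at heq
    have : (j - j) * (l+1) = 0 := by ring
    omega
  -- extremes of the finite part
  set fmax : ℤ := (F₁ ∪ (-F₂)).max' hFne with hfmaxdef
  set fmin : ℤ := (F₁ ∪ (-F₂)).min' hFne with hfmindef
  have hFbd : ∀ f ∈ F₁ ∪ (-F₂), fmin ≤ f ∧ f ≤ fmax := fun f hf =>
    ⟨Finset.min'_le _ f hf, Finset.le_max' _ f hf⟩
  have hfmm : fmin ≤ fmax := (hFbd fmax (Finset.max'_mem _ hFne)).1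
  have hefmax : fmax % m ∈ SE := by
    rw [hSEdef]
    exact Finset.mem_image.mpr ⟨fmax, Finset.max'_mem _ hFne, rfl⟩
  have hefmin : fmin % m ∈ SE := by
    rw [hSEdef]
    exact Finset.mem_image.mpr ⟨fmin, Finset.min'_mem _ hFne, rfl⟩
  -- minimal elements of progression classes
  set mu : ℤ → ℤ := fun d =>
    if h : (A₁.filter (fun x => x % m = d)).Nonempty
    then (A₁.filter (fun x => x % m = d)).min' h else 0 with hmudef
  have hmuspec : ∀ d ∈ S1, mu d ∈ A₁ ∧ (mu d) % m = d ∧ ∀ α ∈ A₁, α % m = d → mu d ≤ α := by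
    intro d hd
    rw [hS1def] at hd
    rcases Finset.mem_image.mp hd with ⟨α, hα, he⟩
    have hne : (A₁.filter (fun x => x % m = d)).Nonempty :=
      ⟨α, Finset.mem_filter.mpr ⟨hα, he⟩⟩
    have hmu_eq : mu d = (A₁.filter (fun x => x % m = d)).min' hne := by
      simp only [hmudef]
      rw [dif_pos hne]
    have h1 := Finset.min'_mem _ hne
    rw [← hmu_eq] at h1
    rcases Finset.mem_filter.mp h1 with ⟨h2, h3⟩
    refine ⟨h2, h3, fun β hβ hbe => ?_⟩
    rw [hmu_eq]
    apply Finset.min'_le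
    exact Finset.mem_filter.mpr ⟨hβ, hbe⟩
  set nu : ℤ → ℤ := fun d =>
    if h : ((-A₂).filter (fun x => x % m = d)).Nonempty
    then ((-A₂).filter (fun x => x % m = d)).max' h else 0 with hnudef
  have hnuspec : ∀ d ∈ S2, nu d ∈ (-A₂ : Finset ℤ) ∧ (nu d) % m = d ∧
      ∀ z ∈ (-A₂ : Finset ℤ), z % m = d → z ≤ nu d := by
    intro d hd
    rw [hS2def] at hd
    rcases Finset.mem_image.mp hd with ⟨z, hz, he⟩
    have hne : ((-A₂).filter (fun x => x % m = d)).Nonempty :=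
      ⟨z, Finset.mem_filter.mpr ⟨hz, he⟩⟩
    have hnu_eq : nu d = ((-A₂).filter (fun x => x % m = d)).max' hne := by
      simp only [hnudef]
      rw [dif_pos hne]
    have h1 := Finset.max'_mem _ hne
    rw [← hnu_eq] at h1
    rcases Finset.mem_filter.mp h1 with ⟨h2, h3⟩
    refine ⟨h2, h3, fun y hy hye => ?_⟩
    rw [hnu_eq]
    apply Finset.le_max'
    exact Finset.mem_filter.mpr ⟨hy, hye⟩
  -- finite classes
  set Cl : ℤ → Finset ℤ := fun e => (F₁ ∪ (-F₂)).filter (fun f => f % m = e) with hCldef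
  have hClne : ∀ e ∈ SE, (Cl e).Nonempty := by
    intro e he
    rw [hSEdef] at he
    rcases Finset.mem_image.mp he with ⟨f, hf, hfe⟩
    exact ⟨f, Finset.mem_filter.mpr ⟨hf, hfe⟩⟩
  set P : ℤ := 2 * (fmax - fmin) + 1 with hPdef
  have hP1 : 1 ≤ P := by omega
  set yF : ℤ → ℤ → ℤ := fun e c => gam (i3 e) + (rk (Cl e) c : ℤ) * (P * m) with hyFdef
  set BadF : ℤ → Set ℤ :=
    fun e => {w | ∃ c₀ ∈ Cl e, ∃ c'' ∈ Cl e, c'' ≠ c₀ ∧ w = yF e c₀ - c''} with hBadFdef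
  -- block upper ends
  set ub : ℤ → ℤ := fun i => if i = K - 1 then b + m else gam (i + 1) - 1 with hubdef
  have hubges : ∀ i, 0 ≤ i → i < K → gam i + 1 - a ≤ ub i - b ∧ ub i ≤ b + m := by
    intro i h0 hK
    constructor
    · simp only [hubdef]
      by_cases hi : i = K - 1
      · rw [if_pos hi]
        have := hgupper i hK
        omega
      · rw [if_neg hi]
        have := hgstep i
        omega
    · simp only [hubdef]
      by_cases hi : i = K - 1
      · rw [if_pos hi]
      · rw [if_neg hi]
        have := hgupper (i+1) (by omega)
        omega
  have hnogap : ∀ i j, 0 ≤ i → i < K → 0 ≤ j → j < K →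
      gam i + 1 ≤ gam j → gam j ≤ ub i → False := by
    intro i j hi0 hiK hj0 hjK h1 h2
    rcases le_or_gt j i with h | h
    · have := hgmono j i h
      omega
    · have h3 := hgmono (i+1) j (by omega)
      simp only [hubdef] at h2
      by_cases hi : i = K - 1
      · rw [if_pos hi] at h2
        have := hgmono (i+1) j (by omega)
        have h4 := hglow j hj0
        -- j ≥ i+1 = K contradicts j < K
        omega
      · rw [if_neg hi] at h2
        omega
  -- C membership lemmas
  have hmodk : ∀ α q : ℤ, (m * q + α) % m = α % m := by
    intro α q
    rw [add_comm]
    exact Int.add_mul_emod_self_left (a := α) (b := m) (c := q)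
  have hCintro1 : ∀ α ∈ A₁, ∀ k : ℕ, (m * k + α) ∈ Cset := by
    intro α hα k
    rw [hCset]
    exact Or.inl (Or.inl ⟨α, hα, k, rfl⟩)
  have hCintro2 : ∀ α ∈ A₂, ∀ k : ℕ, (-(m * k + α)) ∈ Cset := by
    intro α hα k
    rw [hCset]
    refine Or.inr ?_
    rw [Set.mem_neg]
    exact Or.inl ⟨α, hα, k, by ring⟩
  have hFC : ∀ f ∈ F₁ ∪ (-F₂), (f:ℤ) ∈ Cset := by
    intro f hf
    rcases Finset.mem_union.mp hf with h | h
    · rw [hCset]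
      exact Or.inl (Or.inr (by exact_mod_cast h))
    · rcases Finset.mem_neg.mp h with ⟨y, hy, hyf⟩
      rw [hCset]
      refine Or.inr ?_
      rw [Set.mem_neg]
      refine Or.inr ?_
      have : -f = y := by omega
      rw [this]
      exact_mod_cast hy
  have hCelim : ∀ c ∈ Cset, (∃ α ∈ A₁, ∃ k : ℕ, c = m * k + α) ∨ c ∈ F₁ ∨
      (∃ α ∈ A₂, ∃ k : ℕ, -c = m * k + α) ∨ (-c) ∈ F₂ := by
    intro c hc
    rw [hCset] at hc
    rcases hc with (h | h) | h
    · exact Or.inl h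
    · exact Or.inr (Or.inl (by exact_mod_cast h))
    · rw [Set.mem_neg] at h
      rcases h with h | h
      · exact Or.inr (Or.inr (Or.inl h))
      · exact Or.inr (Or.inr (Or.inr (by exact_mod_cast h)))
  have hCres : ∀ c ∈ Cset, c % m ∈ Dfin := by
    intro c hc
    rcases hCelim c hc with ⟨α, hα, k, he⟩ | h | ⟨α, hα, k, he⟩ | h
    · rw [hDdef]
      refine Finset.mem_union.mpr (Or.inl (Finset.mem_union.mpr (Or.inl ?_)))
      rw [he, hmodk, hS1def]
      exact Finset.mem_image.mpr ⟨α, hα, rfl⟩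
    · rw [hDdef]
      refine Finset.mem_union.mpr (Or.inr ?_)
      rw [hSEdef]
      exact Finset.mem_image.mpr ⟨c, Finset.mem_union.mpr (Or.inl h), rfl⟩
    · rw [hDdef]
      refine Finset.mem_union.mpr (Or.inl (Finset.mem_union.mpr (Or.inr ?_)))
      have hc2 : c = m * (-(k:ℤ)) + (-α) := by linear_combination -he
      rw [hc2, hmodk, hS2def]
      exact Finset.mem_image.mpr ⟨-α, Finset.mem_neg.mpr ⟨α, hα, rfl⟩, rfl⟩
    · rw [hDdef]
      refine Finset.mem_union.mpr (Or.inr ?_)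
      rw [hSEdef]
      refine Finset.mem_image.mpr ⟨c, Finset.mem_union.mpr (Or.inr ?_), rfl⟩
      exact Finset.mem_neg.mpr ⟨-c, h, by ring⟩
  have hCbase : ∀ d ∈ Dfin, ∃ c, c ∈ Cset ∧ c % m = d := by
    intro d hd
    rw [hDdef] at hd
    rcases Finset.mem_union.mp hd with h | h
    · rcases Finset.mem_union.mp h with h1 | h1
      · rw [hS1def] at h1
        rcases Finset.mem_image.mp h1 with ⟨α, hα, he⟩
        refine ⟨α, ?_, he⟩
        have := hCintro1 α hα 0
        simpa using this
      · rw [hS2def] at h1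
        rcases Finset.mem_image.mp h1 with ⟨z, hz, he⟩
        rcases Finset.mem_neg.mp hz with ⟨y, hy, hyz⟩
        refine ⟨z, ?_, he⟩
        have := hCintro2 y hy 0
        have h3 : -(m * ((0:ℕ):ℤ) + y) = z := by push_cast; ring_nf; omega
        rwa [h3] at this
    · rw [hSEdef] at h
      rcases Finset.mem_image.mp h with ⟨f, hf, he⟩
      exact ⟨f, hFC f hf, he⟩
  have hCshapeE : ∀ c ∈ Cset, c % m ∈ SE → c ∈ Cl (c % m) := by
    intro c hc hcm
    rw [hSEdef] at hcm
    rcases Finset.mem_image.mp hcm with ⟨f, hf, hfe⟩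
    rcases hCelim c hc with ⟨α, hα, k, he⟩ | h | ⟨α, hα, k, he⟩ | h
    · exfalso
      have h1 : c % m = α % m := by rw [he, hmodk]
      have h2 : Int.ModEq m α f := by unfold Int.ModEq; omega
      exact hcong f hf α (Finset.mem_union.mpr (Or.inl hα)) h2.dvd
    · rw [hCldef]
      exact Finset.mem_filter.mpr ⟨Finset.mem_union.mpr (Or.inl h), rfl⟩
    · exfalso
      have hc2 : c = m * (-(k:ℤ)) + (-α) := by linear_combination -he
      have h1 : c % m = (-α) % m := by rw [hc2, hmodk]
      have h2 : Int.ModEq m (-α) f := by unfold Int.ModEq; omega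
      refine hcong f hf (-α) (Finset.mem_union.mpr (Or.inr ?_)) h2.dvd
      exact Finset.mem_neg.mpr ⟨α, hα, rfl⟩
    · rw [hCldef]
      refine Finset.mem_filter.mpr ⟨Finset.mem_union.mpr (Or.inr ?_), rfl⟩
      exact Finset.mem_neg.mpr ⟨-c, h, by ring⟩
  have hClsubC : ∀ e, ∀ f ∈ Cl e, (f : ℤ) ∈ Cset ∧ f % m = e := by
    intro e f hf
    rw [hCldef] at hf
    rcases Finset.mem_filter.mp hf with ⟨h1, h2⟩
    exact ⟨hFC f h1, h2⟩
  have hClbd : ∀ e, ∀ f ∈ Cl e, fmin ≤ f ∧ f ≤ fmax := by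
    intro e f hf
    rw [hCldef] at hf
    exact hFbd f (Finset.mem_filter.mp hf).1
  have hUpMem : ∀ d ∈ S1, ∀ z, m ∣ z - mu d → mu d ≤ z → z ∈ Cset := by
    intro d hd z hdvd hle
    obtain ⟨q, hq⟩ := hdvd
    have hq0 : 0 ≤ q := by
      by_contra hneg
      have h3 : m * q ≤ m * (-1) := mul_le_mul_of_nonneg_left (by omega) hm0.le
      rw [mul_neg_one] at h3
      omega
    have hz : z = m * (q.toNat : ℤ) + mu d := by
      rw [Int.toNat_of_nonneg hq0]; linarith
    rw [hz]
    exact hCintro1 (mu d) (hmuspec d hd).1 q.toNat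
  have hDnMem : ∀ d ∈ S2, ∀ z, m ∣ z - nu d → z ≤ nu d → z ∈ Cset := by
    intro d hd z hdvd hle
    rcases Finset.mem_neg.mp (hnuspec d hd).1 with ⟨y, hy, hynu⟩
    obtain ⟨q, hq⟩ := hdvd
    have hq0 : 0 ≤ -q := by
      by_contra hneg
      have h3 : m * 1 ≤ m * q := mul_le_mul_of_nonneg_left (by omega) hm0.le
      rw [mul_one] at h3
      omega
    have hz : -z = m * ((-q).toNat : ℤ) + y := by
      rw [Int.toNat_of_nonneg hq0]; linear_combination -hq + hynu
    have : z = -(m * ((-q).toNat : ℤ) + y) := by linarith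
    rw [this]
    exact hCintro2 y hy (-q).toNat
  -- the complement witness
  set Wset : Set ℤ := {w |
    (∃ i, 0 ≤ i ∧ i < K ∧ ∃ t, gam i + 1 - a ≤ t ∧ t ≤ ub i - b ∧ ∃ v ∈ W₀, m ∣ w - v - t) ∨
    (∃ d ∈ S1, w = gam (i1 d) - d) ∨
    (∃ d ∈ S2, w = gam (i2 d) - d) ∨
    (∃ d ∈ S1, m ∣ w - (gam (i1 d) - fmax) ∧ w ≤ mu d + (gam (i1 d) - d) - m - fmax) ∨
    (∃ d ∈ S2, m ∣ w - (gam (i2 d) - fmin) ∧ nu d + (gam (i2 d) - d) + m - fmin ≤ w) ∨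
    (∃ e ∈ SE, m ∣ w - (gam (i3 e) - e) ∧ w ∉ BadF e)} with hWdef
  have cover : ∀ x : ℤ, ∃ c ∈ Cset, ∃ w ∈ Wset, c + w = x := by
    intro x
    set X : ℤ := b + 1 + (x - b - 1) % m with hXdef
    have hXx : m ∣ x - X := by
      obtain ⟨q, hq⟩ := hres (x - b - 1)
      exact ⟨q, by linarith⟩
    have hX1 : b + 1 ≤ X := by
      have := Int.emod_nonneg (x - b - 1) hm0.ne'
      omega
    have hX2 : X ≤ b + m := by
      have := Int.emod_lt_of_pos (x - b - 1) hm0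
      omega
    by_cases hgap : ∃ i, 0 ≤ i ∧ i < K ∧ X = gam i
    · obtain ⟨i, hi0, hiK, hXi⟩ := hgap
      rcases lt_or_ge i (S1.card : ℤ) with hfam | hfam
      · -- up class gap
        obtain ⟨d, hd, hrk⟩ := rk_surj S1 i.toNat (by omega)
        have hid : i1 d = i := by simp only [hi1]; omega
        have hmu := hmuspec d hd
        have hXgam : m ∣ x - gam (i1 d) := by rw [hid, ← hXi]; exact hXx
        have hxc : m ∣ x - (mu d + (gam (i1 d) - d)) := by
          obtain ⟨q1, h1⟩ := hXgam
          obtain ⟨q2, h2⟩ := hres (mu d)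
          rw [hmu.2.1] at h2
          exact ⟨q1 - q2, by linear_combination h1 - h2⟩
        rcases le_or_gt (mu d + (gam (i1 d) - d)) x with hbig | hsmall
        · refine ⟨x - (gam (i1 d) - d), ?_, gam (i1 d) - d, ?_, by ring⟩
          · apply hUpMem d hd
            · obtain ⟨q, hq⟩ := hxc
              exact ⟨q, by linear_combination hq⟩
            · omega
          · rw [hWdef]
            exact Or.inr (Or.inl ⟨d, hd, rfl⟩)
        · have hxle : x ≤ mu d + (gam (i1 d) - d) - m := by
            obtain ⟨q, hq⟩ := hxc
            have hq1 : q ≤ -1 := by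
              by_contra h
              have h3 : m * 0 ≤ m * q := mul_le_mul_of_nonneg_left (by omega) hm0.le
              rw [mul_zero] at h3
              omega
            have h3 : m * q ≤ m * (-1) := mul_le_mul_of_nonneg_left (by omega) hm0.le
            rw [mul_neg_one] at h3
            omega
          refine ⟨fmax, hFC fmax (Finset.max'_mem _ hFne), x - fmax, ?_, by ring⟩
          rw [hWdef]
          refine Or.inr (Or.inr (Or.inr (Or.inl ⟨d, hd, ?_, by omega⟩)))
          obtain ⟨q, hq⟩ := hXgam
          exact ⟨q, by linear_combination hq⟩
      rcases lt_or_ge i ((S1.card:ℤ) + S2.card) with hfam2 | hfam2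
      · -- down class gap
        obtain ⟨d, hd, hrk⟩ := rk_surj S2 (i - S1.card).toNat (by omega)
        have hid : i2 d = i := by simp only [hi2]; omega
        have hnu := hnuspec d hd
        have hXgam : m ∣ x - gam (i2 d) := by rw [hid, ← hXi]; exact hXx
        have hxc : m ∣ x - (nu d + (gam (i2 d) - d)) := by
          obtain ⟨q1, h1⟩ := hXgam
          obtain ⟨q2, h2⟩ := hres (nu d)
          rw [hnu.2.1] at h2
          exact ⟨q1 - q2, by linear_combination h1 - h2⟩
        rcases le_or_gt x (nu d + (gam (i2 d) - d)) with hsmall | hbig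
        · refine ⟨x - (gam (i2 d) - d), ?_, gam (i2 d) - d, ?_, by ring⟩
          · apply hDnMem d hd
            · obtain ⟨q, hq⟩ := hxc
              exact ⟨q, by linear_combination hq⟩
            · omega
          · rw [hWdef]
            exact Or.inr (Or.inr (Or.inl ⟨d, hd, rfl⟩))
        · have hxge : nu d + (gam (i2 d) - d) + m ≤ x := by
            obtain ⟨q, hq⟩ := hxc
            have hq1 : 1 ≤ q := by
              by_contra h
              have h3 : m * q ≤ m * 0 := mul_le_mul_of_nonneg_left (by omega) hm0.le
              rw [mul_zero] at h3
              omega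
            have h3 : m * 1 ≤ m * q := mul_le_mul_of_nonneg_left (by omega) hm0.le
            rw [mul_one] at h3
            omega
          refine ⟨fmin, hFC fmin (Finset.min'_mem _ hFne), x - fmin, ?_, by ring⟩
          rw [hWdef]
          refine Or.inr (Or.inr (Or.inr (Or.inr (Or.inl ⟨d, hd, ?_, by omega⟩))))
          obtain ⟨q, hq⟩ := hXgam
          exact ⟨q, by linear_combination hq⟩
      · -- finite class gap
        obtain ⟨e, he, hrk⟩ := rk_surj SE (i - S1.card - S2.card).toNat (by omega)
        have hie : i3 e = i := by simp only [hi3]; omega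
        have hXgam : m ∣ x - gam (i3 e) := by rw [hie, ← hXi]; exact hXx
        have hpig : ∃ f ∈ Cl e, (x - f) ∉ BadF e := by
          by_contra hall
          push_neg at hall
          have hClene := hClne e he
          set f0 : ℤ := (Cl e).min' hClene with hf0
          have hf0m : f0 ∈ Cl e := Finset.min'_mem _ _
          have h0 := hall f0 hf0m
          simp only [hBadFdef, Set.mem_setOf_eq] at h0
          obtain ⟨c0, hc0, c1, hc1, hne1, heq1⟩ := h0
          have hkey : ∀ f ∈ Cl e, f - x + yF e c0 ∈ Cl e ∧ f - x + yF e c0 ≠ c0 := by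
            intro f hf
            have h' := hall f hf
            simp only [hBadFdef, Set.mem_setOf_eq] at h'
            obtain ⟨c0', hc0', c1', hc1', hne', heq'⟩ := h'
            have hsame : c0' = c0 := by
              have hb1 := hClbd e _ hc1
              have hb2 := hClbd e _ hc1'
              have hb3 := hClbd e _ hf
              have hb4 := hClbd e _ hf0m
              have hyy : yF e c0' - yF e c0 = f0 - f + (c1' - c1) := by linarith
              by_contra hne2
              have hrkne : rk (Cl e) c0' ≠ rk (Cl e) c0 := fun h => hne2 (rk_inj hc0' hc0 h)
              have hyy2 : yF e c0' - yF e c0 =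
                  ((rk (Cl e) c0' : ℤ) - rk (Cl e) c0) * (P * m) := by
                simp only [hyFdef]; ring
              have hPm0 : (0:ℤ) ≤ P * m := mul_nonneg (by omega) hm0.le
              have hPm : P ≤ P * m := le_mul_of_one_le_right (by omega) (by omega)
              rcases lt_or_ge (rk (Cl e) c0') (rk (Cl e) c0) with h | h
              · have hΔ : ((rk (Cl e) c0' : ℤ) - rk (Cl e) c0) ≤ -1 := by
                  have : (rk (Cl e) c0' : ℤ) < rk (Cl e) c0 := by exact_mod_cast h
                  omega
                have h3 : ((rk (Cl e) c0' : ℤ) - rk (Cl e) c0) * (P * m) ≤ (-1) * (P * m) :=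
                  mul_le_mul_of_nonneg_right hΔ hPm0
                rw [neg_one_mul] at h3
                linarith
              · have hΔ : (1:ℤ) ≤ ((rk (Cl e) c0' : ℤ) - rk (Cl e) c0) := by
                  have h4 : (rk (Cl e) c0 : ℤ) ≤ rk (Cl e) c0' := by exact_mod_cast h
                  have h5 : (rk (Cl e) c0 : ℤ) ≠ rk (Cl e) c0' := by
                    intro hx; exact hrkne (by exact_mod_cast hx.symm)
                  omega
                have h3 : (1:ℤ) * (P * m) ≤ ((rk (Cl e) c0' : ℤ) - rk (Cl e) c0) * (P * m) :=
                  mul_le_mul_of_nonneg_right hΔ hPm0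
                rw [one_mul] at h3
                linarith
            rw [hsame] at heq' hne'
            have hc1'eq : c1' = f - x + yF e c0 := by linarith
            rw [← hc1'eq]
            exact ⟨hc1', hne'⟩
          have hcard := Finset.card_le_card_of_injOn (fun f => f - x + yF e c0)
            (fun f hf => Finset.mem_erase.mpr ⟨(hkey f hf).2, (hkey f hf).1⟩)
            (fun u _ v _ h => by simpa using h)
          rw [Finset.card_erase_of_mem hc0] at hcard
          have hcp := Finset.card_pos.mpr hClene
          omega
        obtain ⟨f, hf, hnb⟩ := hpig
        refine ⟨f, (hClsubC e f hf).1, x - f, ?_, by ring⟩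
        rw [hWdef]
        refine Or.inr (Or.inr (Or.inr (Or.inr (Or.inr ⟨e, he, ?_, hnb⟩))))
        obtain ⟨q1, h1⟩ := hXgam
        obtain ⟨q2, h2⟩ := hres f
        rw [(hClsubC e f hf).2] at h2
        exact ⟨q1 - q2, by linear_combination h1 - h2⟩
    · -- interior of a block
      push_neg at hgap
      set i0 : ℤ := (X - b - 1) / (l + 1) with hi0def
      have hdm := Int.mul_ediv_add_emod (X - b - 1) (l + 1)
      have hr0 := Int.emod_nonneg (X - b - 1) (by omega : l + 1 ≠ 0)
      have hr1 := Int.emod_lt_of_pos (X - b - 1) (by omega : (0:ℤ) < l + 1)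
      rw [← hi0def] at hdm
      have hi00 : 0 ≤ i0 := by
        rw [hi0def]
        exact Int.ediv_nonneg (by omega) (by omega)
      have hcomm : (l + 1) * i0 = i0 * (l + 1) := mul_comm _ _
      have hg1 : gam i0 ≤ X := by simp only [hgam]; linarith
      have hg2 : X < gam (i0 + 1) := by
        simp only [hgam]
        have hexp : (i0 + 1) * (l + 1) = (l + 1) * i0 + (l + 1) := by ring
        linarith
      set istar : ℤ := if i0 ≤ K - 1 then i0 else K - 1 with histar
      have hgK : gam K = gam (K - 1) + (l + 1) := by
        have h := hgstep (K - 1)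
        rw [show K - 1 + 1 = K by ring] at h
        exact h
      have hblk : 0 ≤ istar ∧ istar < K ∧ gam istar + 1 ≤ X ∧ X ≤ ub istar := by
        by_cases hc : i0 ≤ K - 1
        · rw [histar, if_pos hc]
          have hXne : X ≠ gam i0 := hgap i0 hi00 (by omega)
          refine ⟨hi00, by omega, by omega, ?_⟩
          simp only [hubdef]
          by_cases h2 : i0 = K - 1
          · rw [if_pos h2]; omega
          · rw [if_neg h2]
            have := hgstep i0
            omega
        · rw [histar, if_neg hc]
          have h3 := hgmono K i0 (by omega)
          refine ⟨by omega, by omega, by omega, ?_⟩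
          have hub2 : ub (K - 1) = b + m := by
            simp only [hubdef]
            exact if_pos trivial
          rw [hub2]
          omega
      obtain ⟨hs0, hsK, hsX1, hsX2⟩ := hblk
      set t : ℤ := max (gam istar + 1 - a) (X - b) with htdef
      have hges := hubges istar hs0 hsK
      have ht1 : gam istar + 1 - a ≤ t := le_max_left _ _
      have ht2 : t ≤ ub istar - b := by
        apply max_le hges.1
        omega
      have hXt : a ≤ X - t ∧ X - t ≤ b := by
        constructor
        · rcases max_choice (gam istar + 1 - a) (X - b) with h | h <;> rw [htdef, h] <;> omega
        · have := le_max_right (gam istar + 1 - a) (X - b)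
          omega
      obtain ⟨d, hdD, v, hv, hdv⟩ := hcov0 (X - t) hXt.1 hXt.2
      obtain ⟨c, hcC, hcd⟩ := hCbase d hdD
      refine ⟨c, hcC, x - c, ?_, by ring⟩
      rw [hWdef]
      refine Or.inl ⟨istar, hs0, hsK, t, ht1, ht2, v, hv, ?_⟩
      obtain ⟨q1, h1⟩ := hXx
      obtain ⟨q2, h2⟩ := hres c
      rw [hcd] at h2
      exact ⟨q1 - q2, by linear_combination h1 - h2 - hdv⟩
  have isolate : ∀ c ∈ Cset, ∃ y : ℤ, ∀ c' ∈ Cset, (∃ w ∈ Wset, c' + w = y) → c' = c := by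
    have hS1D : ∀ d ∈ S1, d ∈ Dfin := by
      intro d hd
      rw [hDdef]
      exact Finset.mem_union.mpr (Or.inl (Finset.mem_union.mpr (Or.inl hd)))
    have hS2D : ∀ d ∈ S2, d ∈ Dfin := by
      intro d hd
      rw [hDdef]
      exact Finset.mem_union.mpr (Or.inl (Finset.mem_union.mpr (Or.inr hd)))
    have hSED : ∀ e ∈ SE, e ∈ Dfin := by
      intro e he
      rw [hDdef]
      exact Finset.mem_union.mpr (Or.inr he)
    have hP1case : ∀ iC : ℤ, 0 ≤ iC → iC < K → ∀ y c' w', m ∣ y - gam iC → c' ∈ Cset →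
        c' + w' = y →
        (∃ i, 0 ≤ i ∧ i < K ∧ ∃ t, gam i + 1 - a ≤ t ∧ t ≤ ub i - b ∧ ∃ v ∈ W₀, m ∣ w' - v - t) →
        False := by
      rintro iC hiC0 hiCK y c' w' hyg hc' he ⟨i, hi0, hiK, t, ht1, ht2, v, hv, hdvd⟩
      have hd' : c' % m ∈ Dfin := hCres c' hc'
      have hsv := hsub (c' % m) hd' v hv
      obtain ⟨q1, h1⟩ := hyg
      obtain ⟨q2, h2⟩ := hres c'
      obtain ⟨q3, h3⟩ := hdvd
      have hgu : m ∣ gam iC - (c' % m + v + t) :=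
        ⟨-q1 + q2 + q3, by linear_combination -h1 + h2 + h3 - he⟩
      have hubb := hubges i hi0 hiK
      have hgiC1 := hglow iC hiC0
      have hgiC2 := hgupper iC hiCK
      have hglowi := hglow i hi0
      have hu1 : gam i + 1 ≤ c' % m + v + t := by omega
      have hu2 : c' % m + v + t ≤ ub i := by omega
      have hequ : gam iC = c' % m + v + t :=
        int_eq_of_dvd_of_lt hm0 hgu (by omega) (by omega)
      exact hnogap i iC hi0 hiK hiC0 hiCK (by omega) (by omega)
    have hkey : ∀ iC j Xv y c' w', 0 ≤ iC → iC < K → 0 ≤ j → j < K →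
        Xv ∈ Dfin → m ∣ y - gam iC → c' ∈ Cset → c' + w' = y → m ∣ w' - (gam j - Xv) →
        iC = j ∧ c' % m = Xv := by
      intro iC j Xv y c' w' h1 h2 h3 h4 hXv hyg hc' he hw
      have hd' : c' % m ∈ Dfin := hCres c' hc'
      obtain ⟨q1, hq1⟩ := hyg
      obtain ⟨q2, hq2⟩ := hres c'
      obtain ⟨q3, hq3⟩ := hw
      have hdd : m ∣ (gam iC - c' % m) - (gam j - Xv) :=
        ⟨-q1 + q2 + q3, by linear_combination -hq1 + hq2 + hq3 - he⟩
      exact hsidon iC j h1 h2 h3 h4 (c' % m) Xv hd' hXv hdd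
    -- isolation for up-progression elements
    have hisoUp : ∀ c ∈ Cset, ∀ d ∈ S1, c % m = d → mu d ≤ c →
        ∃ y : ℤ, ∀ c' ∈ Cset, (∃ w ∈ Wset, c' + w = y) → c' = c := by
      intro c hc d hdS1 hcd hcmu
      have hiK := hi1K d hdS1
      set y : ℤ := c + (gam (i1 d) - d) with hy
      have hyg : m ∣ y - gam (i1 d) := by
        obtain ⟨q, hq⟩ := hres c
        rw [hcd] at hq
        exact ⟨q, by rw [hy]; linear_combination hq⟩
      refine ⟨y, ?_⟩
      rintro c' hc' ⟨w', hw', hce⟩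
      rw [hWdef] at hw'
      simp only [Set.mem_setOf_eq] at hw'
      rcases hw' with h1 | ⟨d'', hd'', h2⟩ | ⟨d'', hd'', h3⟩ | ⟨d'', hd'', h4a, h4b⟩ |
        ⟨d'', hd'', h5a, h5b⟩ | ⟨e', he', h6a, h6b⟩
      · exact absurd h1 (fun hh => hP1case (i1 d) hiK.1 hiK.2 y c' w' hyg hc' hce hh)
      · obtain ⟨hik, -⟩ := hkey (i1 d) (i1 d'') d'' y c' w' hiK.1 hiK.2
          (hi1K d'' hd'').1 (hi1K d'' hd'').2 (hS1D d'' hd'') hyg hc' hce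
          ⟨0, by rw [h2]; ring⟩
        have hdd : d = d'' := hi1inj d hdS1 d'' hd'' hik
        rw [← hdd] at h2
        omega
      · obtain ⟨hik, -⟩ := hkey (i1 d) (i2 d'') d'' y c' w' hiK.1 hiK.2
          (hi2K d'' hd'').1 (hi2K d'' hd'').2 (hS2D d'' hd'') hyg hc' hce
          ⟨0, by rw [h3]; ring⟩
        have := hi1rng d hdS1
        have := hi2rng d'' hd''
        omega
      · have h4a' : m ∣ w' - (gam (i1 d'') - fmax % m) := by
          obtain ⟨q1, hq1⟩ := h4a
          obtain ⟨q2, hq2⟩ := hres fmax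
          exact ⟨q1 - q2, by linear_combination hq1 - hq2⟩
        obtain ⟨hik, hcm⟩ := hkey (i1 d) (i1 d'') (fmax % m) y c' w' hiK.1 hiK.2
          (hi1K d'' hd'').1 (hi1K d'' hd'').2 (hSED _ hefmax) hyg hc' hce h4a'
        have hdd : d = d'' := hi1inj d hdS1 d'' hd'' hik
        have hc'E : c' ∈ Cl (c' % m) := hCshapeE c' hc' (by rw [hcm]; exact hefmax)
        have hc'le : c' ≤ fmax := (hClbd _ _ hc'E).2
        rw [← hdd] at h4b
        omega
      · obtain ⟨hik, -⟩ := hkey (i1 d) (i2 d'') (fmin % m) y c' w' hiK.1 hiK.2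
          (hi2K d'' hd'').1 (hi2K d'' hd'').2 (hSED _ hefmin) hyg hc' hce
          (by
            obtain ⟨q1, hq1⟩ := h5a
            obtain ⟨q2, hq2⟩ := hres fmin
            exact ⟨q1 - q2, by linear_combination hq1 - hq2⟩)
        have := hi1rng d hdS1
        have := hi2rng d'' hd''
        omega
      · obtain ⟨hik, -⟩ := hkey (i1 d) (i3 e') e' y c' w' hiK.1 hiK.2
          (hi3K e' he').1 (hi3K e' he').2 (hSED e' he') hyg hc' hce h6a
        have := hi1rng d hdS1
        have := hi3rng e' he'
        omega
    -- isolation for down-progression elements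
    have hisoDn : ∀ c ∈ Cset, ∀ d ∈ S2, c % m = d → c ≤ nu d →
        ∃ y : ℤ, ∀ c' ∈ Cset, (∃ w ∈ Wset, c' + w = y) → c' = c := by
      intro c hc d hdS2 hcd hcnu
      have hiK := hi2K d hdS2
      set y : ℤ := c + (gam (i2 d) - d) with hy
      have hyg : m ∣ y - gam (i2 d) := by
        obtain ⟨q, hq⟩ := hres c
        rw [hcd] at hq
        exact ⟨q, by rw [hy]; linear_combination hq⟩
      refine ⟨y, ?_⟩
      rintro c' hc' ⟨w', hw', hce⟩
      rw [hWdef] at hw'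
      simp only [Set.mem_setOf_eq] at hw'
      rcases hw' with h1 | ⟨d'', hd'', h2⟩ | ⟨d'', hd'', h3⟩ | ⟨d'', hd'', h4a, h4b⟩ |
        ⟨d'', hd'', h5a, h5b⟩ | ⟨e', he', h6a, h6b⟩
      · exact absurd h1 (fun hh => hP1case (i2 d) hiK.1 hiK.2 y c' w' hyg hc' hce hh)
      · obtain ⟨hik, -⟩ := hkey (i2 d) (i1 d'') d'' y c' w' hiK.1 hiK.2
          (hi1K d'' hd'').1 (hi1K d'' hd'').2 (hS1D d'' hd'') hyg hc' hce
          ⟨0, by rw [h2]; ring⟩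
        have := hi2rng d hdS2
        have := hi1rng d'' hd''
        omega
      · obtain ⟨hik, -⟩ := hkey (i2 d) (i2 d'') d'' y c' w' hiK.1 hiK.2
          (hi2K d'' hd'').1 (hi2K d'' hd'').2 (hS2D d'' hd'') hyg hc' hce
          ⟨0, by rw [h3]; ring⟩
        have hdd : d = d'' := hi2inj d hdS2 d'' hd'' hik
        rw [← hdd] at h3
        omega
      · obtain ⟨hik, -⟩ := hkey (i2 d) (i1 d'') (fmax % m) y c' w' hiK.1 hiK.2
          (hi1K d'' hd'').1 (hi1K d'' hd'').2 (hSED _ hefmax) hyg hc' hce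
          (by
            obtain ⟨q1, hq1⟩ := h4a
            obtain ⟨q2, hq2⟩ := hres fmax
            exact ⟨q1 - q2, by linear_combination hq1 - hq2⟩)
        have := hi2rng d hdS2
        have := hi1rng d'' hd''
        omega
      · have h5a' : m ∣ w' - (gam (i2 d'') - fmin % m) := by
          obtain ⟨q1, hq1⟩ := h5a
          obtain ⟨q2, hq2⟩ := hres fmin
          exact ⟨q1 - q2, by linear_combination hq1 - hq2⟩
        obtain ⟨hik, hcm⟩ := hkey (i2 d) (i2 d'') (fmin % m) y c' w' hiK.1 hiK.2
          (hi2K d'' hd'').1 (hi2K d'' hd'').2 (hSED _ hefmin) hyg hc' hce h5a'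
        have hdd : d = d'' := hi2inj d hdS2 d'' hd'' hik
        have hc'E : c' ∈ Cl (c' % m) := hCshapeE c' hc' (by rw [hcm]; exact hefmin)
        have hc'ge : fmin ≤ c' := (hClbd _ _ hc'E).1
        rw [← hdd] at h5b
        omega
      · obtain ⟨hik, -⟩ := hkey (i2 d) (i3 e') e' y c' w' hiK.1 hiK.2
          (hi3K e' he').1 (hi3K e' he').2 (hSED e' he') hyg hc' hce h6a
        have := hi2rng d hdS2
        have := hi3rng e' he'
        omega
    -- isolation for finite-part elements
    have hisoF : ∀ c ∈ Cset, c ∈ F₁ ∪ (-F₂) →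
        ∃ y : ℤ, ∀ c' ∈ Cset, (∃ w ∈ Wset, c' + w = y) → c' = c := by
      intro c hc hcF
      have heSE : c % m ∈ SE := by
        rw [hSEdef]
        exact Finset.mem_image.mpr ⟨c, hcF, rfl⟩
      have hcCl : c ∈ Cl (c % m) := by
        rw [hCldef]
        exact Finset.mem_filter.mpr ⟨hcF, rfl⟩
      have hiK := hi3K _ heSE
      set y : ℤ := yF (c % m) c with hy
      have hyg : m ∣ y - gam (i3 (c % m)) :=
        ⟨(rk (Cl (c % m)) c : ℤ) * P, by rw [hy]; simp only [hyFdef]; ring⟩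
      refine ⟨y, ?_⟩
      rintro c' hc' ⟨w', hw', hce⟩
      rw [hWdef] at hw'
      simp only [Set.mem_setOf_eq] at hw'
      rcases hw' with h1 | ⟨d'', hd'', h2⟩ | ⟨d'', hd'', h3⟩ | ⟨d'', hd'', h4a, h4b⟩ |
        ⟨d'', hd'', h5a, h5b⟩ | ⟨e', he', h6a, h6b⟩
      · exact absurd h1 (fun hh => hP1case (i3 (c % m)) hiK.1 hiK.2 y c' w' hyg hc' hce hh)
      · obtain ⟨hik, -⟩ := hkey (i3 (c % m)) (i1 d'') d'' y c' w' hiK.1 hiK.2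
          (hi1K d'' hd'').1 (hi1K d'' hd'').2 (hS1D d'' hd'') hyg hc' hce
          ⟨0, by rw [h2]; ring⟩
        have := hi3rng _ heSE
        have := hi1rng d'' hd''
        omega
      · obtain ⟨hik, -⟩ := hkey (i3 (c % m)) (i2 d'') d'' y c' w' hiK.1 hiK.2
          (hi2K d'' hd'').1 (hi2K d'' hd'').2 (hS2D d'' hd'') hyg hc' hce
          ⟨0, by rw [h3]; ring⟩
        have := hi3rng _ heSE
        have := hi2rng d'' hd''
        omega
      · obtain ⟨hik, -⟩ := hkey (i3 (c % m)) (i1 d'') (fmax % m) y c' w' hiK.1 hiK.2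
          (hi1K d'' hd'').1 (hi1K d'' hd'').2 (hSED _ hefmax) hyg hc' hce
          (by
            obtain ⟨q1, hq1⟩ := h4a
            obtain ⟨q2, hq2⟩ := hres fmax
            exact ⟨q1 - q2, by linear_combination hq1 - hq2⟩)
        have := hi3rng _ heSE
        have := hi1rng d'' hd''
        omega
      · obtain ⟨hik, -⟩ := hkey (i3 (c % m)) (i2 d'') (fmin % m) y c' w' hiK.1 hiK.2
          (hi2K d'' hd'').1 (hi2K d'' hd'').2 (hSED _ hefmin) hyg hc' hce
          (by
            obtain ⟨q1, hq1⟩ := h5a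
            obtain ⟨q2, hq2⟩ := hres fmin
            exact ⟨q1 - q2, by linear_combination hq1 - hq2⟩)
        have := hi3rng _ heSE
        have := hi2rng d'' hd''
        omega
      · obtain ⟨hik, hcm⟩ := hkey (i3 (c % m)) (i3 e') e' y c' w' hiK.1 hiK.2
          (hi3K e' he').1 (hi3K e' he').2 (hSED e' he') hyg hc' hce h6a
        have hee : c % m = e' := hi3inj _ heSE e' he' hik
        rw [← hee] at h6b hcm
        by_contra hne
        apply h6b
        simp only [hBadFdef, Set.mem_setOf_eq]
        have hc'Cl : c' ∈ Cl (c % m) := by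
          have := hCshapeE c' hc' (by rw [hcm]; exact heSE)
          rwa [hcm] at this
        exact ⟨c, hcCl, c', hc'Cl, hne, by rw [hy] at hce; linarith⟩
    intro c hc
    rcases hCelim c hc with ⟨α, hα, k, he⟩ | hF1 | ⟨α, hα, k, he⟩ | hF2
    · have hcd : c % m = α % m := by rw [he, hmodk]
      have hdS1 : α % m ∈ S1 := by
        rw [hS1def]
        exact Finset.mem_image.mpr ⟨α, hα, rfl⟩
      have hcmu : mu (α % m) ≤ c := by
        have h1 := (hmuspec _ hdS1).2.2 α hα rfl
        have hk0 : (0:ℤ) ≤ m * k := mul_nonneg hm0.le (by positivity)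
        omega
      exact hisoUp c hc (α % m) hdS1 hcd hcmu
    · exact hisoF c hc (Finset.mem_union.mpr (Or.inl hF1))
    · have hc2 : c = m * (-(k:ℤ)) + (-α) := by linear_combination -he
      have hcd : c % m = (-α) % m := by rw [hc2, hmodk]
      have hdS2 : (-α) % m ∈ S2 := by
        rw [hS2def]
        exact Finset.mem_image.mpr ⟨-α, Finset.mem_neg.mpr ⟨α, hα, rfl⟩, rfl⟩
      have hcnu : c ≤ nu ((-α) % m) := by
        have h1 := (hnuspec _ hdS2).2.2 (-α) (Finset.mem_neg.mpr ⟨α, hα, rfl⟩) rfl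
        have hk0 : (0:ℤ) ≤ m * k := mul_nonneg hm0.le (by positivity)
        omega
      exact hisoDn c hc ((-α) % m) hdS2 hcd hcnu
    · exact hisoF c hc (Finset.mem_union.mpr (Or.inr (Finset.mem_neg.mpr ⟨-c, hF2, by ring⟩)))
  refine ⟨Wset, ?_, ?_⟩
  · apply Set.eq_univ_of_forall
    intro x
    obtain ⟨c, hc, w, hw, he⟩ := cover x
    exact Set.mem_add.mpr ⟨c, hc, w, hw, he⟩
  · intro C' hC' habs
    obtain ⟨c, hc, hcnot⟩ := Set.exists_of_ssubset hC'
    obtain ⟨y, hy⟩ := isolate c hc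
    have hyu : y ∈ C' + Wset := by rw [habs]; trivial
    rcases Set.mem_add.mp hyu with ⟨c', hc', w, hw, he⟩
    have hcc : c' = c := hy c' (hC'.subset hc') ⟨w, hw, he⟩
    exact hcnot (hcc ▸ hc')
end

section
/- Let A₀, A₁, A₂ be multisets of integers, not all empty. Then (A₀ ⊞ A₀ ⊞ A₀) + ((A₁ ⊞ A₁ ⊞ A₁) ⊕ 1) + ((A₂ ⊞ A₂ ⊞ A₂) ⊕ 2) ≠ 3·((A₀ ⊞ A₁ ⊞ A₂) ⊕ 1) as multisets, where 3·M denotes M + M + M. (Equivalently, the determinant of the 3×3 Toeplitz matrix q^{A₀}q^{A₀}q^{A₀} + q^{A₁}q^{A₁}q^{A₁+1} + q^{A₂}q^{A₂+1}q^{A₂+1} − 3q^{A₀}q^{A₁}q^{A₂}q¹ is nonzero, so multiplicative inverses in (Frac Q)[[x]]/⟨x³ − q¹⟩ exist and are unique when m = 3.) -/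
/-- Minkowski product of multisets of integers, with multiplicity. -/
def mink (A B : Multiset ℤ) : Multiset ℤ :=
  A.bind (fun a => B.map (a + ·))

lemma card_mink (A B : Multiset ℤ) : (mink A B).card = A.card * B.card := by
  simp [mink, Multiset.card_bind, mul_comm]

lemma mem_mink {x : ℤ} {A B : Multiset ℤ} :
    x ∈ mink A B ↔ ∃ a ∈ A, ∃ b ∈ B, a + b = x := by
  simp [mink, Multiset.mem_bind]

lemma mink_mem {a b : ℤ} {A B : Multiset ℤ} (ha : a ∈ A) (hb : b ∈ B) :
    a + b ∈ mink A B := mem_mink.2 ⟨a, ha, b, hb, rfl⟩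

lemma exists_min (A : Multiset ℤ) (h : A ≠ 0) : ∃ m ∈ A, ∀ x ∈ A, m ≤ x := by
  have hne : A.toFinset.Nonempty := by
    rw [Multiset.toFinset_nonempty]; exact h
  obtain ⟨m, hm, hmin⟩ := A.toFinset.exists_min_image id hne
  exact ⟨m, by simpa using hm, fun x hx => hmin x (by simpa using hx)⟩

theorem toeplitz_det_nonzero_m3 (A₀ A₁ A₂ : Multiset ℤ)
    (h : ¬ (A₀ = 0 ∧ A₁ = 0 ∧ A₂ = 0)) :
    mink (mink A₀ A₀) A₀ + ((mink (mink A₁ A₁) A₁).map (· + 1))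
        + ((mink (mink A₂ A₂) A₂).map (· + 2))
      ≠ 3 • ((mink (mink A₀ A₁) A₂).map (· + 1)) := by
  intro heq
  -- cardinalities
  have hcard := congrArg Multiset.card heq
  simp only [Multiset.card_add, Multiset.card_map, Multiset.card_nsmul, card_mink] at hcard
  set a := A₀.card with ha'
  set b := A₁.card with hb'
  set c := A₂.card with hc'
  -- all nonempty
  have hA₀ : A₀ ≠ 0 := by
    intro h0
    have ha0 : a = 0 := by rw [ha', h0]; rfl
    have : b = 0 ∧ c = 0 := by
      rw [ha0] at hcard
      simpa [Nat.add_eq_zero, Nat.mul_eq_zero] using hcard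
    exact h ⟨h0, Multiset.card_eq_zero.1 this.1, Multiset.card_eq_zero.1 this.2⟩
  have hA₁ : A₁ ≠ 0 := by
    intro h0
    have hb0 : b = 0 := by rw [hb', h0]; rfl
    have : a = 0 ∧ c = 0 := by
      rw [hb0] at hcard
      simpa [Nat.add_eq_zero, Nat.mul_eq_zero] using hcard
    exact h ⟨Multiset.card_eq_zero.1 this.1, h0, Multiset.card_eq_zero.1 this.2⟩
  have hA₂ : A₂ ≠ 0 := by
    intro h0
    have hc0 : c = 0 := by rw [hc', h0]; rfl
    have : a = 0 ∧ b = 0 := by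
      rw [hc0] at hcard
      simpa [Nat.add_eq_zero, Nat.mul_eq_zero] using hcard
    exact h ⟨Multiset.card_eq_zero.1 this.1, Multiset.card_eq_zero.1 this.2, h0⟩
  -- minima
  obtain ⟨m₀, hm₀, hmin₀⟩ := exists_min A₀ hA₀
  obtain ⟨m₁, hm₁, hmin₁⟩ := exists_min A₁ hA₁
  obtain ⟨m₂, hm₂, hmin₂⟩ := exists_min A₂ hA₂
  set v := min (3 * m₀) (min (3 * m₁ + 1) (3 * m₂ + 2)) with hv
  have hv₀ : v ≤ 3 * m₀ := min_le_left _ _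
  have hv₁ : v ≤ 3 * m₁ + 1 := le_trans (min_le_right _ _) (min_le_left _ _)
  have hv₂ : v ≤ 3 * m₂ + 2 := le_trans (min_le_right _ _) (min_le_right _ _)
  have hveq : v = 3 * m₀ ∨ v = 3 * m₁ + 1 ∨ v = 3 * m₂ + 2 := by
    rcases min_cases (3 * m₀) (min (3 * m₁ + 1) (3 * m₂ + 2)) with h1 | h1
    · exact Or.inl h1.1
    · rcases min_cases (3 * m₁ + 1) (3 * m₂ + 2) with h2 | h2
      · exact Or.inr (Or.inl (h1.1.trans h2.1))
      · exact Or.inr (Or.inr (h1.1.trans h2.1))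
  have hvlt : v < m₀ + m₁ + m₂ + 1 := by omega
  -- v is in the LHS
  have hvL : v ∈ mink (mink A₀ A₀) A₀ + ((mink (mink A₁ A₁) A₁).map (· + 1))
      + ((mink (mink A₂ A₂) A₂).map (· + 2)) := by
    rcases hveq with h1 | h1 | h1
    · refine Multiset.mem_add.2 (Or.inl (Multiset.mem_add.2 (Or.inl ?_)))
      have : m₀ + m₀ + m₀ ∈ mink (mink A₀ A₀) A₀ :=
        mink_mem (mink_mem hm₀ hm₀) hm₀
      simpa [h1] using (by convert this using 1; ring)
    · refine Multiset.mem_add.2 (Or.inl (Multiset.mem_add.2 (Or.inr ?_)))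
      refine Multiset.mem_map.2 ⟨m₁ + m₁ + m₁, mink_mem (mink_mem hm₁ hm₁) hm₁, ?_⟩
      omega
    · refine Multiset.mem_add.2 (Or.inr ?_)
      refine Multiset.mem_map.2 ⟨m₂ + m₂ + m₂, mink_mem (mink_mem hm₂ hm₂) hm₂, ?_⟩
      omega
  -- hence v is in the RHS
  rw [heq] at hvL
  have hvR : v ∈ (mink (mink A₀ A₁) A₂).map (· + 1) := by
    exact (Multiset.mem_nsmul.1 hvL).2
  obtain ⟨w, hw, hwv⟩ := Multiset.mem_map.1 hvR
  obtain ⟨u, hu, x₂, hx₂, hux⟩ := mem_mink.1 hw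
  obtain ⟨x₀, hx₀, x₁, hx₁, hxx⟩ := mem_mink.1 hu
  have h0 := hmin₀ x₀ hx₀
  have h1 := hmin₁ x₁ hx₁
  have h2 := hmin₂ x₂ hx₂
  omega
end
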